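/- arXiv:1304.6593 — 3 statements merged into one kernel-verified Lean document; each statement's English description precedes it below -/
import Mathlib

section
/- Let (V,E) be a tree with |V| ≥ 2 and consider a metric weighted link instance on it with parameter p. If there exists at least one feasible link set, then there exists an optimal (minimum-cost feasible) link set F such that every node incident to a link of F is a corner node, i.e., a leaf or a node of degree at least 3 in the tree. -/
open scoped Classical ENNReal

/-- `e` is an edge of the (unique) `a`–`b` path in the graph `G`: `a` and `b` are
connected and every `a`–`b` walk traverses `e`.  (In a tree this says exactly that
`e` lies on the unique path `P(a,b)`.) -/
def OnPath {V : Type*} (G : SimpleGraph V) (a b : V) (e : Sym2 V) : Prop :=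
  G.Reachable a b ∧ ∀ w : G.Walk a b, e ∈ w.edges

/-- A link `(u, v, t)` is valid for parameter `p`: its endpoints are distinct and its
weight `t` satisfies `1 ≤ t ≤ p`. -/
def ValidLink {V : Type*} (p : ℕ) (l : V × V × ℕ) : Prop :=
  l.1 ≠ l.2.1 ∧ 1 ≤ l.2.2 ∧ l.2.2 ≤ p

/-- The link `f = (x, y, t')` is a shadow of the link `e = (u, v, t)`:
`t' ≥ t` and `P(x,y) ⊆ P(u,v)`. -/
def IsShadow {V : Type*} (G : SimpleGraph V) (f e : V × V × ℕ) : Prop :=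
  e.2.2 ≤ f.2.2 ∧ ∀ ed : Sym2 V, OnPath G f.1 f.2.1 ed → OnPath G e.1 e.2.1 ed

/-- The weighted link instance `c` on the tree `G` with parameter `p` is metric:
(i) `c f ≤ c e` whenever the link `f` is a shadow of the link `e`;
(ii) the triangle inequalities `c (u,z,t₃) ≤ c (u,v,t₁) + c (v,z,t₂)` hold whenever
`t₃ ≥ t₁ + t₂`. -/
def IsMetricInstance {V : Type*} (G : SimpleGraph V) (p : ℕ)
    (c : V → V → ℕ → ℝ≥0∞) : Prop :=
  (∀ e f : V × V × ℕ, ValidLink p e → ValidLink p f → IsShadow G f e →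
      c f.1 f.2.1 f.2.2 ≤ c e.1 e.2.1 e.2.2) ∧
  (∀ u v z : V, ∀ t₁ t₂ t₃ : ℕ, u ≠ v → v ≠ z → u ≠ z →
      1 ≤ t₁ → 1 ≤ t₂ → t₃ ≤ p → t₁ + t₂ ≤ t₃ →
      c u z t₃ ≤ c u v t₁ + c v z t₂)

/-- A link set `F` is feasible: all links are valid, the total weight is at most `p`,
and the union of the paths `P(u,v)` over the links `(u,v,t) ∈ F` equals the edge set
of the tree. -/
def Feasible {V : Type*} (G : SimpleGraph V) (p : ℕ) (F : Finset (V × V × ℕ)) : Prop :=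
  (∀ l ∈ F, ValidLink p l) ∧ (∑ l ∈ F, l.2.2) ≤ p ∧
    {e : Sym2 V | ∃ l ∈ F, OnPath G l.1 l.2.1 e} = G.edgeSet

/-- The total cost of a link set. -/
noncomputable def linkCost {V : Type*} (c : V → V → ℕ → ℝ≥0∞)
    (F : Finset (V × V × ℕ)) : ℝ≥0∞ :=
  ∑ l ∈ F, c l.1 l.2.1 l.2.2

/-!
Start from an optimal link set and modify it, keeping it feasible and its cost from
growing, while the number of links plus their total path length strictly decreases.
Suppose a link `(u, v, t)` has an endpoint `u` of degree 2; let `w` be the neighbour of `u`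
towards `v` and `w'` the other one. Some other link covers `uw'`. If some other link also
covers `uw`, replace `(u, v, t)` by its shadow `(w, v, t)` (or drop it when `w = v`).
Otherwise the link covering `uw'` cannot pass through `u`, since a path through a vertex of
degree 2 uses both of its edges; so it ends at `u`, say it is `(x, u, s)`, and the triangle
inequality merges it with `(u, v, t)` into `(x, v, s + t)`. In a tree every endpoint of a
link has positive degree, so once no endpoint has degree 2, all endpoints are corners.
-/

open SimpleGraph

section OnPath

variable {V : Type*} {G : SimpleGraph V} {a b a' b' u x : V} {e : Sym2 V}

lemma OnPath.mem_edgeSet (h : OnPath G a b e) : e ∈ G.edgeSet :=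
  h.1.some.edges_subset_edgeSet (h.2 _)

lemma onPath_comm : OnPath G a b e ↔ OnPath G b a e := by
  suffices ∀ {a b}, OnPath G a b e → OnPath G b a e from ⟨this, this⟩
  intro a b ⟨hab, h⟩
  exact ⟨hab.symm, fun w => by simpa using h w.reverse⟩

lemma onPath_congr (h : s(a, b) = s(a', b')) : OnPath G a b e ↔ OnPath G a' b' e := by
  rcases Sym2.eq_iff.1 h with ⟨rfl, rfl⟩ | ⟨rfl, rfl⟩
  exacts [Iff.rfl, onPath_comm]

lemma not_onPath_self : ¬OnPath G a a e := fun h => by simpa using h.2 SimpleGraph.Walk.nil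

lemma OnPath.eq_of_adj (hab : G.Adj a b) (h : OnPath G a b e) : e = s(a, b) := by
  simpa using h.2 (Walk.cons hab Walk.nil)

lemma OnPath.or_of_reachable (h : OnPath G a b e) (hx : G.Reachable a x) :
    OnPath G a x e ∨ OnPath G x b e := by
  by_contra! hne
  obtain ⟨w₁, hw₁⟩ : ∃ w : G.Walk a x, e ∉ w.edges := by
    simpa [OnPath, hx] using hne.1
  obtain ⟨w₂, hw₂⟩ : ∃ w : G.Walk x b, e ∉ w.edges := by
    simpa [OnPath, hx.symm.trans h.1] using hne.2
  simpa [hw₁, hw₂] using h.2 (w₁.append w₂)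

namespace SimpleGraph.IsAcyclic

variable (hG : G.IsAcyclic)
include hG

lemma onPath_iff_mem_edges {q : G.Walk a b} (hq : q.IsPath) :
    OnPath G a b e ↔ e ∈ q.edges := by
  classical
  refine ⟨fun h => h.2 q, fun he => ⟨q.reachable, fun w => ?_⟩⟩
  have : w.bypass = q := congrArg Subtype.val <|
    (hG.subsingleton_path a b).elim ⟨_, w.bypass_isPath⟩ ⟨q, hq⟩
  exact w.edges_bypass_subset_edges (this ▸ he)

lemma onPath_of_mem_support {R : G.Walk a b} (hR : R.IsPath) (hu : u ∈ R.support)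
    (h : OnPath G a u e ∨ OnPath G u b e) : OnPath G a b e := by
  obtain ⟨q, r, hq, hr, rfl⟩ := hR.mem_support_iff_exists_append.1 hu
  rw [hG.onPath_iff_mem_edges hq, hG.onPath_iff_mem_edges hr] at h
  rw [hG.onPath_iff_mem_edges hR, Walk.edges_append, List.mem_append]
  exact h

lemma dist_eq_length {q : G.Walk a b} (hq : q.IsPath) : G.dist a b = q.length := by
  obtain ⟨r, hr, hlen⟩ := q.reachable.exists_path_of_dist
  have : q = r := congrArg Subtype.val <| (hG.subsingleton_path a b).elim ⟨q, hq⟩ ⟨r, hr⟩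
  rw [← hlen, this]

end SimpleGraph.IsAcyclic

lemma SimpleGraph.Walk.IsPath.exists_ne_mem_edges_of_mem_support {y : V} {r : G.Walk x y}
    (hr : r.IsPath) (hu : u ∈ r.support) (hx : u ≠ x) (hy : u ≠ y) :
    ∃ a b, a ≠ b ∧ s(u, a) ∈ r.edges ∧ s(u, b) ∈ r.edges := by
  obtain ⟨n, rfl, hn⟩ := Walk.mem_support_iff_exists_getVert.1 hu
  have h0 : n ≠ 0 := by rintro rfl; exact hx (by simp)
  have hlt : n < r.length := lt_of_le_of_ne hn (by rintro rfl; exact hy (by simp))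
  have hcard := hr.ncard_neighborSet_toSubgraph_internal_eq_two h0 hlt
  rw [hr.neighborSet_toSubgraph_internal h0 hlt] at hcard
  refine ⟨r.getVert (n - 1), r.getVert (n + 1), fun h => by simp [h] at hcard, ?_, ?_⟩ <;>
    rw [← Walk.adj_toSubgraph_iff_mem_edges, ← Subgraph.mem_neighborSet,
      hr.neighborSet_toSubgraph_internal h0 hlt] <;> simp

end OnPath

section Exchange

variable {ι : Type*} [DecidableEq ι] {F A B : Finset ι}

lemma Finset.sum_sdiff_union_le {M : Type*} [AddCommMonoid M] [PartialOrder M]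
    [IsOrderedAddMonoid M] [CanonicallyOrderedAdd M] (f : ι → M) (hA : A ⊆ F)
    (h : ∑ i ∈ B, f i ≤ ∑ i ∈ A, f i) : ∑ i ∈ F \ A ∪ B, f i ≤ ∑ i ∈ F, f i :=
  calc ∑ i ∈ F \ A ∪ B, f i
      ≤ ∑ i ∈ F \ A ∪ B, f i + ∑ i ∈ F \ A ∩ B, f i := le_self_add
    _ = ∑ i ∈ F \ A, f i + ∑ i ∈ B, f i := Finset.sum_union_inter
    _ ≤ ∑ i ∈ F \ A, f i + ∑ i ∈ A, f i := by gcongr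
    _ = ∑ i ∈ F, f i := Finset.sum_sdiff hA

lemma Finset.sum_sdiff_union_lt {M : Type*} [AddCommMonoid M] [PartialOrder M]
    [IsOrderedCancelAddMonoid M] [CanonicallyOrderedAdd M] (f : ι → M) (hA : A ⊆ F)
    (h : ∑ i ∈ B, f i < ∑ i ∈ A, f i) : ∑ i ∈ F \ A ∪ B, f i < ∑ i ∈ F, f i :=
  calc ∑ i ∈ F \ A ∪ B, f i
      ≤ ∑ i ∈ F \ A ∪ B, f i + ∑ i ∈ F \ A ∩ B, f i := le_self_add
    _ = ∑ i ∈ F \ A, f i + ∑ i ∈ B, f i := Finset.sum_union_inter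
    _ < ∑ i ∈ F \ A, f i + ∑ i ∈ A, f i := by gcongr
    _ = ∑ i ∈ F, f i := Finset.sum_sdiff hA

end Exchange

section LinkSets

variable {V : Type*} {G : SimpleGraph V} {p : ℕ} {c : V → V → ℕ → ℝ≥0∞}
  {F A B : Finset (V × V × ℕ)}

def Covers (G : SimpleGraph V) (F : Finset (V × V × ℕ)) (e : Sym2 V) : Prop :=
  ∃ l ∈ F, OnPath G l.1 l.2.1 e

/-- The `+ 1` makes merging two links into one strictly decrease it. -/
noncomputable def linkSize (G : SimpleGraph V) (F : Finset (V × V × ℕ)) : ℕ :=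
  ∑ l ∈ F, (G.dist l.1 l.2.1 + 1)

def Improvable (G : SimpleGraph V) (p : ℕ) (c : V → V → ℕ → ℝ≥0∞)
    (F : Finset (V × V × ℕ)) : Prop :=
  ∃ F', Feasible G p F' ∧ linkCost c F' ≤ linkCost c F ∧ linkSize G F' < linkSize G F

lemma validLink_congr {a b a' b' : V} {t : ℕ} (h : s(a, b) = s(a', b')) :
    ValidLink p (a, b, t) ↔ ValidLink p (a', b', t) := by
  rcases Sym2.eq_iff.1 h with ⟨rfl, rfl⟩ | ⟨rfl, rfl⟩
  exacts [Iff.rfl, by simp [ValidLink, ne_comm]]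

lemma SimpleGraph.dist_congr {a b a' b' : V} (h : s(a, b) = s(a', b')) :
    G.dist a b = G.dist a' b' := by
  rcases Sym2.eq_iff.1 h with ⟨rfl, rfl⟩ | ⟨rfl, rfl⟩
  exacts [rfl, dist_comm]

lemma IsMetricInstance.cost_congr (hc : IsMetricInstance G p c) {a b a' b' : V} {t : ℕ}
    (h : s(a, b) = s(a', b')) (hv : ValidLink p (a, b, t)) : c a b t = c a' b' t := by
  have hv' := (validLink_congr h).1 hv
  rcases Sym2.eq_iff.1 h with ⟨rfl, rfl⟩ | ⟨rfl, rfl⟩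
  · rfl
  · exact le_antisymm (hc.1 _ _ hv' hv ⟨le_rfl, fun _ => onPath_comm.1⟩)
      (hc.1 _ _ hv hv' ⟨le_rfl, fun _ => onPath_comm.1⟩)

lemma Feasible.covers (hF : Feasible G p F) {e : Sym2 V} (he : e ∈ G.edgeSet) :
    Covers G F e := by
  rw [← hF.2.2] at he
  exact he

lemma Feasible.sum_weight_le (hF : Feasible G p F) (hA : A ⊆ F) : ∑ l ∈ A, l.2.2 ≤ p :=
  (Finset.sum_le_sum_of_subset hA).trans hF.2.1

lemma Feasible.improvable_of_exchange (hF : Feasible G p F) (hA : A ⊆ F)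
    (hvalid : ∀ l ∈ B, ValidLink p l) (hweight : ∑ l ∈ B, l.2.2 ≤ ∑ l ∈ A, l.2.2)
    (hcover : ∀ e, Covers G A e → Covers G (F \ A ∪ B) e)
    (hcost : linkCost c B ≤ linkCost c A) (hsize : linkSize G B < linkSize G A) :
    Improvable G p c F := by
  refine ⟨F \ A ∪ B, ⟨fun l hl => ?_, ?_, ?_⟩, Finset.sum_sdiff_union_le _ hA hcost,
    Finset.sum_sdiff_union_lt _ hA hsize⟩
  · rcases Finset.mem_union.1 hl with hl | hl
    exacts [hF.1 l (Finset.sdiff_subset hl), hvalid l hl]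
  · exact (Finset.sum_sdiff_union_le _ hA hweight).trans hF.2.1
  · refine Set.Subset.antisymm (fun e ⟨l, _, hl⟩ => hl.mem_edgeSet) fun e he => ?_
    obtain ⟨l, hlF, hl⟩ := hF.covers he
    by_cases hlA : l ∈ A
    · exact hcover e ⟨l, hlA, hl⟩
    · exact ⟨l, Finset.mem_union_left _ (Finset.mem_sdiff.2 ⟨hlF, hlA⟩), hl⟩

lemma Feasible.subset_univ_product [Fintype V] (hF : Feasible G p F) :
    F ⊆ Finset.univ ×ˢ Finset.univ ×ˢ Finset.range (p + 1) := fun l hl => by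
  simpa [Nat.lt_succ_iff] using (hF.1 l hl).2.2

lemma exists_feasible_forall_linkCost_le [Fintype V] (h : ∃ F, Feasible G p F) :
    ∃ F, Feasible G p F ∧ ∀ F', Feasible G p F' → linkCost c F ≤ linkCost c F' := by
  obtain ⟨F₀, hF₀⟩ := h
  obtain ⟨F, hF, hmin⟩ :=
    ((Finset.univ ×ˢ Finset.univ ×ˢ Finset.range (p + 1)).powerset.filter
      (Feasible G p)).exists_min_image (linkCost c)
      ⟨F₀, by simpa [hF₀] using hF₀.subset_univ_product⟩
  refine ⟨F, (Finset.mem_filter.1 hF).2, fun F' hF' => hmin F' ?_⟩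
  simpa [hF'] using hF'.subset_univ_product

end LinkSets

section Improvement

variable {V : Type*} {G : SimpleGraph V} {p : ℕ} {c : V → V → ℕ → ℝ≥0∞}
  {F : Finset (V × V × ℕ)} {a b u v w : V} {t : ℕ}

lemma Feasible.improvable_of_shrink (hG : G.IsAcyclic) (hc : IsMetricInstance G p c)
    (hF : Feasible G p F) (hl : (a, b, t) ∈ F) (hab : s(a, b) = s(u, v)) {huw : G.Adj u w}
    {tl : G.Walk w v} (hq : (Walk.cons huw tl).IsPath) {g : V × V × ℕ}
    (hg : g ∈ F) (hgl : g ≠ (a, b, t)) (hge : OnPath G g.1 g.2.1 s(u, w)) :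
    Improvable G p c F := by
  have hv : ValidLink p (u, v, t) := (validLink_congr hab).1 (hF.1 _ hl)
  have hsplit : ∀ e, OnPath G a b e → e = s(u, w) ∨ OnPath G w v e := fun e he =>
    (((onPath_congr hab).1 he).or_of_reachable huw.reachable).imp_left (OnPath.eq_of_adj huw)
  have hg' : g ∈ F \ {(a, b, t)} := by simp [hg, hgl]
  have hA : {(a, b, t)} ⊆ F := Finset.singleton_subset_iff.2 hl
  by_cases hwv : w = v
  · subst hwv
    refine hF.improvable_of_exchange (B := ∅) hA (by simp) (by simp) ?_
      (by simp [linkCost]) (by simp [linkSize])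
    rintro e ⟨l, hl', he⟩
    rw [Finset.mem_singleton.1 hl'] at he
    rcases hsplit e he with rfl | he
    exacts [⟨g, Finset.mem_union_left _ hg', hge⟩, absurd he not_onPath_self]
  · refine hF.improvable_of_exchange (B := {(w, v, t)}) hA
      (by simpa only [Finset.mem_singleton, forall_eq] using ⟨hwv, hv.2⟩) (by simp) ?_ ?_ ?_
    · rintro e ⟨l, hl', he⟩
      rw [Finset.mem_singleton.1 hl'] at he
      rcases hsplit e he with rfl | he
      exacts [⟨g, Finset.mem_union_left _ hg', hge⟩, ⟨(w, v, t), by simp, he⟩]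
    · have hshadow : IsShadow G (w, v, t) (u, v, t) := ⟨le_rfl, fun e he =>
        hG.onPath_of_mem_support hq (by simp) (Or.inr he)⟩
      simpa [linkCost, hc.cost_congr hab (hF.1 _ hl)] using
        hc.1 (u, v, t) (w, v, t) hv ⟨hwv, hv.2⟩ hshadow
    · have := dist_le tl
      simp only [linkSize, Finset.sum_singleton, dist_congr hab, hG.dist_eq_length hq,
        Walk.length_cons]
      omega

lemma Feasible.improvable_of_merge (hG : G.IsAcyclic) (hc : IsMetricInstance G p c)
    (hF : Feasible G p F) (hl : (a, b, t) ∈ F) (hab : s(a, b) = s(u, v)) {a' b' x : V} {s : ℕ}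
    (hg : (a', b', s) ∈ F) (hab' : s(a', b') = s(x, u)) (hgl : (a', b', s) ≠ (a, b, t))
    {R : G.Walk x v} (hR : R.IsPath) (hu : u ∈ R.support) :
    Improvable G p c F := by
  have hv : ValidLink p (u, v, t) := (validLink_congr hab).1 (hF.1 _ hl)
  have hv' : ValidLink p (x, u, s) := (validLink_congr hab').1 (hF.1 _ hg)
  have hxv : x ≠ v := by
    rintro rfl
    rw [Walk.nil_iff_support_eq.1 (Walk.isPath_iff_nil.1 hR)] at hu
    exact hv.1 (by simpa using hu)
  have hA : {(a', b', s), (a, b, t)} ⊆ F := Finset.insert_subset hg (by simpa using hl)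
  have hweight : s + t ≤ p := by simpa [Finset.sum_pair hgl] using hF.sum_weight_le hA
  refine hF.improvable_of_exchange (B := {(x, v, s + t)}) hA
    (by simpa only [Finset.mem_singleton, forall_eq] using ⟨hxv, le_add_left hv.2.1, hweight⟩)
    (by simp [Finset.sum_pair hgl]) ?_ ?_ ?_
  · rintro e ⟨l, hl', he⟩
    refine ⟨_, Finset.mem_union_right _ (Finset.mem_singleton_self _),
      hG.onPath_of_mem_support hR hu ?_⟩
    rcases Finset.mem_insert.1 hl' with rfl | hl'
    · exact Or.inl ((onPath_congr hab').1 he)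
    · rw [Finset.mem_singleton.1 hl'] at he
      exact Or.inr ((onPath_congr hab).1 he)
  · simpa [linkCost, Finset.sum_pair hgl, hc.cost_congr hab (hF.1 _ hl),
      hc.cost_congr hab' (hF.1 _ hg)] using
      hc.2 x u v s t (s + t) hv'.1 hv.1 hxv hv'.2.1 hv.2.1 hweight le_rfl
  · obtain ⟨q, r, -, -, rfl⟩ := hR.mem_support_iff_exists_append.1 hu
    have := q.reachable.dist_triangle_left v
    simp only [linkSize, Finset.sum_singleton, Finset.sum_pair hgl, dist_congr hab,
      dist_congr hab']
    omega

end Improvement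

section Corners

variable {V : Type*} [Fintype V] {G : SimpleGraph V} [DecidableRel G.Adj] {p : ℕ}
  {c : V → V → ℕ → ℝ≥0∞} {F : Finset (V × V × ℕ)} {a b u w : V} {t : ℕ}

def SimpleGraph.IsCorner (G : SimpleGraph V) [DecidableRel G.Adj] (v : V) : Prop :=
  G.degree v = 1 ∨ 3 ≤ G.degree v

lemma SimpleGraph.Connected.degree_eq_two_of_not_isCorner (hG : G.Connected) {v : V}
    (huv : u ≠ v) (hu : ¬G.IsCorner u) : G.degree u = 2 := by
  obtain ⟨q⟩ := hG.preconnected u v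
  cases q with
  | nil => exact absurd rfl huv
  | cons h _ =>
    have := (G.degree_pos_iff_exists_adj u).2 ⟨_, h⟩
    unfold IsCorner at hu
    omega

lemma SimpleGraph.Walk.IsPath.mem_edges_of_degree_eq_two {x y : V} {r : G.Walk x y}
    (hr : r.IsPath) (hu : u ∈ r.support) (hx : u ≠ x) (hy : u ≠ y) (hdeg : G.degree u = 2)
    (huw : G.Adj u w) : s(u, w) ∈ r.edges := by
  classical
  obtain ⟨α, β, hαβ, hα, hβ⟩ := hr.exists_ne_mem_edges_of_mem_support hu hx hy
  have hN : G.neighborFinset u = {α, β} := by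
    refine (Finset.eq_of_subset_of_card_le ?_ ?_).symm
    · simpa [Finset.insert_subset_iff] using ⟨r.adj_of_mem_edges hα, r.adj_of_mem_edges hβ⟩
    · rw [Finset.card_pair hαβ, G.card_neighborFinset_eq_degree, hdeg]
  have hw : w ∈ G.neighborFinset u := (G.mem_neighborFinset u w).2 huw
  rw [hN, Finset.mem_insert, Finset.mem_singleton] at hw
  rcases hw with rfl | rfl
  exacts [hα, hβ]

lemma Feasible.improvable_of_degree_eq_two (hT : G.IsTree)
    (hc : IsMetricInstance G p c) (hF : Feasible G p F) (hl : (a, b, t) ∈ F) (hu : u ∈ s(a, b))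
    (hdeg : G.degree u = 2) :
    Improvable G p c F := by
  obtain ⟨v, hab⟩ := Sym2.mem_iff_exists.1 hu
  have hv : ValidLink p (u, v, t) := (validLink_congr hab).1 (hF.1 _ hl)
  obtain ⟨q, hq, -⟩ := hT.connected.exists_path_of_dist u v
  cases q with
  | nil => exact absurd rfl hv.1
  | @cons _ w _ huw tl =>
  by_cases hcov : ∃ g ∈ F, g ≠ (a, b, t) ∧ OnPath G g.1 g.2.1 s(u, w)
  · obtain ⟨g, hg, hgl, hge⟩ := hcov
    exact hF.improvable_of_shrink hT.isAcyclic hc hl hab hq hg hgl hge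
  push Not at hcov
  obtain ⟨w', hw'N, hw'w⟩ := (G.neighborFinset u).exists_mem_ne
    (by rw [G.card_neighborFinset_eq_degree, hdeg]; norm_num) w
  have huw' : G.Adj u w' := (G.mem_neighborFinset u w').1 hw'N
  have hw'q : ¬OnPath G u v s(u, w') := fun h => hw'w <|
    (hT.isAcyclic.eq_snd_of_adj_start hq huw' <| Walk.snd_mem_support_of_mem_edges _
      ((hT.isAcyclic.onPath_iff_mem_edges hq).1 h)).trans (Walk.snd_cons tl huw)
  obtain ⟨⟨a', b', s⟩, hg, hge'⟩ := hF.covers (G.mem_edgeSet.2 huw')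
  have hgl : (a', b', s) ≠ (a, b, t) := by
    rintro ⟨⟩
    exact hw'q ((onPath_congr hab).1 hge')
  have hge : ¬OnPath G a' b' s(u, w) := hcov _ hg hgl
  obtain ⟨r, hr, -⟩ := hT.connected.exists_path_of_dist a' b'
  have hu' : u ∈ s(a', b') := by
    rw [hT.isAcyclic.onPath_iff_mem_edges hr] at hge hge'
    by_contra h
    rw [Sym2.mem_iff, not_or] at h
    exact hge <| hr.mem_edges_of_degree_eq_two (r.fst_mem_support_of_mem_edges hge') h.1 h.2
      hdeg huw
  obtain ⟨x, hx⟩ := Sym2.mem_iff_exists.1 hu'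
  have hxv : OnPath G x v s(u, w) := by
    have huv : OnPath G u v s(u, w) :=
      (hT.isAcyclic.onPath_iff_mem_edges hq).2 (by simp)
    refine (huv.or_of_reachable (hT.connected.preconnected u x)).resolve_left fun h => ?_
    exact hge ((onPath_congr hx).2 h)
  obtain ⟨R, hR, -⟩ := hT.connected.exists_path_of_dist x v
  exact hF.improvable_of_merge hT.isAcyclic hc hl hab hg (hx.trans Sym2.eq_swap)
    hgl hR (R.fst_mem_support_of_mem_edges ((hT.isAcyclic.onPath_iff_mem_edges hR).1 hxv))

lemma Feasible.exists_forall_isCorner (hT : G.IsTree) (hc : IsMetricInstance G p c)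
    (hF : Feasible G p F) :
    ∃ F', Feasible G p F' ∧ linkCost c F' ≤ linkCost c F ∧
      ∀ l ∈ F', G.IsCorner l.1 ∧ G.IsCorner l.2.1 := by
  induction hn : linkSize G F using Nat.strong_induction_on generalizing F with
  | _ n ih =>
  by_cases h : ∀ l ∈ F, G.IsCorner l.1 ∧ G.IsCorner l.2.1
  · exact ⟨F, hF, le_rfl, h⟩
  push Not at h
  obtain ⟨⟨a, b, t⟩, hl, hbad⟩ := h
  have hab : a ≠ b := (hF.1 _ hl).1
  obtain ⟨F₁, hF₁, hcost₁, hsize₁⟩ : Improvable G p c F := by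
    by_cases ha : G.IsCorner a
    · exact hF.improvable_of_degree_eq_two hT hc hl (Sym2.mem_mk_right a b)
        (hT.connected.degree_eq_two_of_not_isCorner hab.symm (hbad ha))
    · exact hF.improvable_of_degree_eq_two hT hc hl (Sym2.mem_mk_left a b)
        (hT.connected.degree_eq_two_of_not_isCorner hab ha)
  obtain ⟨F', hF', hcost', hcorner⟩ := ih _ (hn ▸ hsize₁) hF₁ rfl
  exact ⟨F', hF', hcost'.trans hcost₁, hcorner⟩

end Corners

theorem exists_optimal_on_corners_tree_general {V : Type*} [Fintype V]
    (G : SimpleGraph V) [DecidableRel G.Adj] (hT : G.IsTree)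
    (p : ℕ) (c : V → V → ℕ → ℝ≥0∞)
    (hmetric : IsMetricInstance G p c)
    (hfeas : ∃ F : Finset (V × V × ℕ), Feasible G p F) :
    ∃ F : Finset (V × V × ℕ), Feasible G p F ∧
      (∀ F' : Finset (V × V × ℕ), Feasible G p F' → linkCost c F ≤ linkCost c F') ∧
      ∀ l ∈ F, (G.degree l.1 = 1 ∨ 3 ≤ G.degree l.1) ∧
        (G.degree l.2.1 = 1 ∨ 3 ≤ G.degree l.2.1) := by
  obtain ⟨F₀, hF₀, hopt⟩ := exists_feasible_forall_linkCost_le (c := c) hfeas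
  obtain ⟨F, hF, hcost, hcorner⟩ := hF₀.exists_forall_isCorner hT hmetric
  exact ⟨F, hF, fun F' hF' => hcost.trans (hopt F' hF'), hcorner⟩

/-- For a metric weighted link instance on a tree that admits a feasible link set,
there is an optimal (minimum-cost feasible) link set all of whose links are incident
only to corner nodes (leaves and nodes of degree at least 3). -/
theorem exists_optimal_on_corners_tree {V : Type*} [Fintype V]
    (G : SimpleGraph V) [DecidableRel G.Adj] (hT : G.IsTree)
    (hV : 2 ≤ Fintype.card V) (p : ℕ) (c : V → V → ℕ → ℝ≥0∞)
    (hsymm : ∀ u v t, c u v t = c v u t)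
    (hmetric : IsMetricInstance G p c)
    (hfeas : ∃ F : Finset (V × V × ℕ), Feasible G p F) :
    ∃ F : Finset (V × V × ℕ), Feasible G p F ∧
      (∀ F' : Finset (V × V × ℕ), Feasible G p F' → linkCost c F ≤ linkCost c F') ∧
      ∀ l ∈ F, (G.degree l.1 = 1 ∨ 3 ≤ G.degree l.1) ∧
        (G.degree l.2.1 = 1 ∨ 3 ≤ G.degree l.2.1) :=
  exists_optimal_on_corners_tree_general G hT p c hmetric hfeas
end

section
/- Let G = (V,E) be a 2-edge-connected multigraph in which every 3-inseparable set is a singleton, i.e., for every two distinct nodes x,y there is X ⊆ V with x ∈ X, y ∉ X and d_E(X) ≤ 2. Then G is a cactus: every edge of E belongs to exactly one circuit of G. -/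
/-!
Existence: 2-edge-connectivity leaves no bridge, so an edge `uw` is closed into a circuit by a
path from `w` to `u` avoiding it.

Uniqueness: if circuits `K ≠ L` share an edge, the part of `L` around an edge outside `K` is an
ear of `K`, a path between distinct nodes `x, y` of `K` with no edge in `K`. Then `x` and `y` are
joined by three edge-disjoint walks (the two arcs of `K` and the ear), so every set separating
them is left by at least three edges.
-/

open scoped Classical

/-- The edge `e` has exactly one endpoint in `X`. -/
def CrossesEdge {V E : Type*} (ends : E → Sym2 V) (X : Finset V) (e : E) : Prop :=
  ∃ u v, ends e = s(u, v) ∧ u ∈ X ∧ v ∉ X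

/-- The number of edges with exactly one endpoint in `X`. -/
noncomputable def cutDeg {V E : Type*} [Fintype E] (ends : E → Sym2 V)
    (X : Finset V) : ℕ :=
  (Finset.univ.filter (CrossesEdge ends X)).card

/-- `C` is a circuit of the multigraph: the edge set of a simple cycle, i.e. there are
`m ≥ 2` distinct edges `e₀, …, e_{m-1}` and `m` distinct nodes `v₀, …, v_{m-1}` with
`e_i` joining `v_i` and `v_{i+1 (mod m)}`, and `C = {e₀, …, e_{m-1}}`. -/
noncomputable def IsCircuit {V E : Type*} (ends : E → Sym2 V) (C : Finset E) : Prop :=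
  ∃ (m : ℕ) (hm : 2 ≤ m) (e : Fin m → E) (v : Fin m → V),
    Function.Injective e ∧ Function.Injective v ∧
    (∀ i : Fin m, ends (e i) = s(v i, v ⟨(i.val + 1) % m, Nat.mod_lt _ (by omega)⟩)) ∧
    C = Finset.image e Finset.univ

namespace Multigraph

variable {V E : Type*}

inductive IsWalk (ends : E → Sym2 V) : V → V → List E → List V → Prop
  | nil (a : V) : IsWalk ends a a [] [a]
  | cons {a b c : V} {f : E} {es : List E} {vs : List V} :
      ends f = s(a, b) → IsWalk ends b c es vs → IsWalk ends a c (f :: es) (a :: vs)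

variable {ends : E → Sym2 V}

namespace IsWalk

variable {a b c x y : V} {f : E} {es : List E} {vs : List V}

theorem length_eq (hw : IsWalk ends a b es vs) : vs.length = es.length + 1 := by
  induction hw with
  | nil => rfl
  | cons _ _ ih => simp [ih]

theorem snoc (hw : IsWalk ends a b es vs) (hf : ends f = s(b, c)) :
    IsWalk ends a c (es ++ [f]) (vs ++ [c]) := by
  induction hw with
  | nil a => exact .cons hf (.nil c)
  | cons hg _ ih => exact .cons hg (ih hf)

theorem reverse (hw : IsWalk ends a b es vs) : IsWalk ends b a es.reverse vs.reverse := by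
  induction hw with
  | nil a => exact .nil a
  | cons hf _ ih => simpa using ih.snoc (hf.trans Sym2.eq_swap)

theorem start_mem (hw : IsWalk ends a b es vs) : a ∈ vs := by
  cases hw <;> simp

theorem mem_of_mem_edges (hw : IsWalk ends a b es vs) (hf : f ∈ es) (hxy : ends f = s(x, y)) :
    y ∈ vs := by
  induction hw with
  | nil => simp at hf
  | cons hg hw ih =>
    rcases List.mem_cons.mp hf with rfl | hf
    · rcases Sym2.eq_iff.mp (hxy.symm.trans hg) with ⟨-, rfl⟩ | ⟨-, rfl⟩
      · exact List.mem_cons_of_mem _ hw.start_mem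
      · exact List.mem_cons_self
    · exact List.mem_cons_of_mem _ (ih hf)

theorem nodup_edges (hw : IsWalk ends a b es vs) (hvs : vs.Nodup) : es.Nodup := by
  induction hw with
  | nil => exact List.nodup_nil
  | cons hf hw ih =>
    rw [List.nodup_cons] at hvs ⊢
    exact ⟨fun h => hvs.1 (hw.mem_of_mem_edges h (hf.trans Sym2.eq_swap)), ih hvs.2⟩

theorem getElem_zero (hw : IsWalk ends a b es vs) : vs[0]'(by simp [hw.length_eq]) = a := by
  cases hw <;> rfl

theorem getElem_length (hw : IsWalk ends a b es vs) :
    vs[es.length]'(by simp [hw.length_eq]) = b := by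
  induction hw with
  | nil => rfl
  | cons _ _ ih => exact ih

theorem ends_getElem (hw : IsWalk ends a b es vs) (i : ℕ) (hi : i < es.length) :
    ends es[i] =
      s(vs[i]'(by simp [hw.length_eq]; omega), vs[i + 1]'(by simp [hw.length_eq]; omega)) := by
  induction hw generalizing i with
  | nil => simp at hi
  | cons hf hw ih =>
    cases i with
    | zero => simpa [hw.getElem_zero] using hf
    | succ i => exact ih i (by simpa using hi)

theorem split (hw : IsWalk ends a b es vs) (hy : y ∈ vs) :
    ∃ es₁ es₂ vs₁ vs₂, IsWalk ends a y es₁ vs₁ ∧ IsWalk ends y b es₂ vs₂ ∧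
      es₁ ++ es₂ = es ∧ vs₂ <:+ vs := by
  induction hw with
  | nil a =>
    obtain rfl := List.mem_singleton.mp hy
    exact ⟨[], [], [y], [y], .nil y, .nil y, rfl, List.suffix_refl _⟩
  | @cons a _ _ f es vs hf hw ih =>
    by_cases hya : y = a
    · subst hya
      exact ⟨[], f :: es, [y], y :: vs, .nil y, .cons hf hw, rfl, List.suffix_refl _⟩
    · obtain ⟨es₁, es₂, vs₁, vs₂, hw₁, hw₂, rfl, hsuf⟩ :=
        ih ((List.mem_cons.mp hy).resolve_left hya)
      exact ⟨f :: es₁, es₂, a :: vs₁, vs₂, .cons hf hw₁, hw₂, rfl,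
        hsuf.trans (List.suffix_cons _ _)⟩

theorem exists_nodup (hw : IsWalk ends a b es vs) :
    ∃ es' vs', IsWalk ends a b es' vs' ∧ vs'.Nodup ∧ es' ⊆ es := by
  induction hw with
  | nil a => exact ⟨[], [a], .nil a, List.nodup_singleton a, List.Subset.refl _⟩
  | @cons a _ _ f es _ hf _ ih =>
    obtain ⟨es', vs', hw', hvs', hsub⟩ := ih
    by_cases ha : a ∈ vs'
    · -- cut off the closed detour through `a`
      obtain ⟨es₁, es₂, -, vs₂, -, hw₂, rfl, hsuf⟩ := hw'.split ha
      exact ⟨es₂, vs₂, hw₂, hvs'.sublist hsuf.sublist,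
        fun g hg => List.mem_cons_of_mem _ (hsub (List.mem_append_right _ hg))⟩
    · exact ⟨f :: es', a :: vs', .cons hf hw', List.nodup_cons.mpr ⟨ha, hvs'⟩,
        List.cons_subset_cons _ hsub⟩

theorem exists_crossesEdge {X : Finset V} (hw : IsWalk ends a b es vs) (ha : a ∈ X)
    (hb : b ∉ X) : ∃ f ∈ es, CrossesEdge ends X f := by
  induction hw with
  | nil => exact absurd ha hb
  | @cons a c _ f _ _ hf _ ih =>
    by_cases hc : c ∈ X
    · obtain ⟨g, hg, hcross⟩ := ih hc hb
      exact ⟨g, List.mem_cons_of_mem _ hg, hcross⟩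
    · exact ⟨f, List.mem_cons_self, a, c, hf, ha, hc⟩

theorem exists_two_crossesEdge {X : Finset V} (hw : IsWalk ends a a es vs) (hes : es.Nodup)
    (hx : x ∈ vs) (hy : y ∈ vs) (hxX : x ∈ X) (hyX : y ∉ X) :
    ∃ f₁ ∈ es, ∃ f₂ ∈ es, f₁ ≠ f₂ ∧ CrossesEdge ends X f₁ ∧ CrossesEdge ends X f₂ := by
  obtain ⟨z, hz, hzX⟩ : ∃ z ∈ vs, (z ∈ X ↔ a ∉ X) := by
    by_cases haX : a ∈ X
    · exact ⟨y, hy, by simp [haX, hyX]⟩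
    · exact ⟨x, hx, by simp [haX, hxX]⟩
  obtain ⟨es₁, es₂, vs₁, vs₂, hw₁, hw₂, rfl, -⟩ := hw.split hz
  have hdisj := (List.nodup_append.mp hes).2.2
  by_cases haX : a ∈ X
  · obtain ⟨f₁, hf₁, hc₁⟩ := hw₁.exists_crossesEdge haX (by simpa [haX] using hzX)
    obtain ⟨f₂, hf₂, hc₂⟩ := hw₂.reverse.exists_crossesEdge haX (by simpa [haX] using hzX)
    rw [List.mem_reverse] at hf₂
    exact ⟨f₁, List.mem_append_left _ hf₁, f₂, List.mem_append_right _ hf₂,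
      hdisj f₁ hf₁ f₂ hf₂, hc₁, hc₂⟩
  · have hzX : z ∈ X := hzX.mpr haX
    obtain ⟨f₁, hf₁, hc₁⟩ := hw₁.reverse.exists_crossesEdge hzX haX
    obtain ⟨f₂, hf₂, hc₂⟩ := hw₂.exists_crossesEdge hzX haX
    rw [List.mem_reverse] at hf₁
    exact ⟨f₁, List.mem_append_left _ hf₁, f₂, List.mem_append_right _ hf₂,
      hdisj f₁ hf₁ f₂ hf₂, hc₁, hc₂⟩

section Ear

variable {S : Set V} {F : Set E}

theorem exists_walk_to_mem_of_not_mem (hF : ∀ g ∈ F, ∀ x y, ends g = s(x, y) → y ∈ S)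
    (hw : IsWalk ends a b es vs) (ha : a ∉ S) (hb : b ∈ S) :
    ∃ y ∈ S, y ∈ vs ∧ ∃ es' vs', IsWalk ends a y es' vs' ∧ ∀ g ∈ es', g ∉ F := by
  induction hw with
  | nil => exact absurd hb ha
  | @cons a c _ f _ _ hf hw ih =>
    have hfF : f ∉ F := fun h => ha (hF f h c a (hf.trans Sym2.eq_swap))
    by_cases hc : c ∈ S
    · exact ⟨c, hc, List.mem_cons_of_mem _ hw.start_mem, [f], [a, c], .cons hf (.nil c),
        by simpa using hfF⟩
    · obtain ⟨y, hyS, hyvs, es', vs', hw', hes'⟩ := ih hc hb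
      exact ⟨y, hyS, List.mem_cons_of_mem _ hyvs, f :: es', a :: vs', .cons hf hw',
        List.forall_mem_cons.mpr ⟨hfF, hes'⟩⟩

theorem exists_ear (hF : ∀ g ∈ F, ∀ x y, ends g = s(x, y) → y ∈ S)
    (hw : IsWalk ends a b es vs) (hvs : vs.Nodup) (ha : a ∈ S) (hb : b ∈ S) (hf : f ∈ es)
    (hfF : f ∉ F) :
    ∃ x ∈ S, ∃ y ∈ S, x ≠ y ∧ ∃ es' vs', IsWalk ends x y es' vs' ∧ ∀ g ∈ es', g ∉ F := by
  induction hw with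
  | nil => simp at hf
  | @cons a c _ g es vs hg hw ih =>
    have ha' : a ∉ vs := (List.nodup_cons.mp hvs).1
    by_cases hgF : g ∈ F
    · have hfes : f ∈ es := (List.mem_cons.mp hf).resolve_left (by rintro rfl; exact hfF hgF)
      exact ih (List.nodup_cons.mp hvs).2 (hF g hgF a c hg) hb hfes
    by_cases hc : c ∈ S
    · exact ⟨a, ha, c, hc, fun h => ha' (h ▸ hw.start_mem), [g], [a, c], .cons hg (.nil c),
        by simpa using hgF⟩
    · obtain ⟨y, hyS, hyvs, es', vs', hw', hes'⟩ :=
        hw.exists_walk_to_mem_of_not_mem hF hc hb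
      exact ⟨a, ha, y, hyS, fun h => ha' (h ▸ hyvs), g :: es', a :: vs', .cons hg hw',
        List.forall_mem_cons.mpr ⟨hgF, hes'⟩⟩

end Ear

end IsWalk

theorem isWalk_map_range (p : ℕ → V) (q : ℕ → E) (k : ℕ)
    (h : ∀ s < k, ends (q s) = s(p s, p (s + 1))) :
    IsWalk ends (p 0) (p k) ((List.range k).map q) ((List.range (k + 1)).map p) := by
  induction k with
  | zero => exact .nil (p 0)
  | succ k ih =>
    rw [List.range_succ (n := k), List.map_append, List.range_succ (n := k + 1), List.map_append]
    exact (ih fun s hs => h s (by omega)).snoc (h k (by omega))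

theorem isCircuit_insert_of_path {u w : V} {e : E} {es : List E} {vs : List V}
    (hw : IsWalk ends w u es vs) (hvs : vs.Nodup) (hwu : w ≠ u) (he : ends e = s(u, w))
    (hes : e ∉ es) : IsCircuit ends (insert e es.toFinset) := by
  have hlen := hw.length_eq
  have hpos : 0 < es.length := by
    cases hw with
    | nil => exact absurd rfl hwu
    | cons => simp
  have hnodup : (es ++ [e]).Nodup := List.nodup_append.mpr
    ⟨hw.nodup_edges hvs, List.nodup_singleton e,
      by simpa using fun g hg => ne_of_mem_of_not_mem hg hes⟩
  let ec : Fin vs.length → E := fun i => (es ++ [e])[i.val]'(by simp; omega)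
  have hec : Function.Injective ec := fun i j h => Fin.ext (hnodup.getElem_inj_iff.mp h)
  refine ⟨vs.length, by omega, ec, fun i => vs[i.val], hec,
    fun i j h => Fin.ext (hvs.getElem_inj_iff.mp h), fun ⟨i, hi⟩ => ?_, ?_⟩
  · rcases Nat.lt_or_ge i es.length with h | h
    · have hmod : (i + 1) % vs.length = i + 1 := Nat.mod_eq_of_lt (by omega)
      simpa [ec, hmod, List.getElem_append_left h] using hw.ends_getElem i h
    · obtain rfl : i = es.length := by omega
      have hmod : (es.length + 1) % vs.length = 0 := by simp [hlen]
      simpa [ec, hmod, hw.getElem_zero, hw.getElem_length] using he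
  · symm
    refine Finset.eq_of_subset_of_card_le ?_ ?_
    · intro g hg
      obtain ⟨i, -, rfl⟩ := Finset.mem_image.mp hg
      have := List.getElem_mem (show i.val < (es ++ [e]).length by simp; omega)
      simp only [List.mem_append, List.mem_singleton] at this
      simpa [ec, or_comm] using this
    · rw [Finset.card_image_of_injective _ hec, Finset.card_univ, Fintype.card_fin,
        Finset.card_insert_of_notMem (by simpa using hes),
        List.toFinset_card_of_nodup (hw.nodup_edges hvs), hlen]

theorem _root_.IsCircuit.exists_path {C : Finset E} {e : E} (hC : IsCircuit ends C) (he : e ∈ C) :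
    ∃ u w es vs, ends e = s(u, w) ∧ IsWalk ends w u es vs ∧ vs.Nodup ∧ e ∉ es ∧
      C = insert e es.toFinset := by
  obtain ⟨m, hm, ec, vc, hec, hvc, hrel, rfl⟩ := hC
  obtain ⟨j, -, rfl⟩ := Finset.mem_image.mp he
  -- walk once around the cycle, starting right after `ec j`
  let r : ℕ → Fin m := fun s => ⟨(j + 1 + s) % m, Nat.mod_lt _ (by omega)⟩
  have hr : ∀ s < m, ∀ t < m, r s = r t → s = t := fun s hs t ht h => by
    have := Nat.ModEq.add_left_cancel' (j + 1) (congrArg Fin.val h)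
    rwa [Nat.ModEq, Nat.mod_eq_of_lt hs, Nat.mod_eq_of_lt ht] at this
  have hr_last : r (m - 1) = j := Fin.ext <| by
    simp only [r]
    rw [show j + 1 + (m - 1) = j + m by omega, Nat.add_mod_right, Nat.mod_eq_of_lt j.isLt]
  have hw := isWalk_map_range (ends := ends) (vc ∘ r) (ec ∘ r) (m - 1) fun s _ => by
    simpa [r, Nat.add_mod_mod, Nat.add_assoc] using hrel (r s)
  rw [Nat.sub_add_cancel (by omega : 1 ≤ m)] at hw
  simp only [Function.comp_apply, hr_last] at hw
  have hvs : ((List.range m).map (vc ∘ r)).Nodup := List.nodup_range.map_on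
    fun s hs t ht h => hr s (List.mem_range.mp hs) t (List.mem_range.mp ht) (hvc h)
  have hej : ec j ∉ (List.range (m - 1)).map (ec ∘ r) := by
    simp only [List.mem_map, List.mem_range, Function.comp_apply, not_exists, not_and]
    intro s hs h
    have := hr s (by omega) (m - 1) (by omega) ((hec h).trans hr_last.symm)
    omega
  refine ⟨vc j, vc (r 0), _, _, by simpa [r] using hrel j, hw, hvs, hej, ?_⟩
  refine (Finset.eq_of_subset_of_card_le ?_ ?_).symm
  · refine Finset.insert_subset (Finset.mem_image_of_mem _ (Finset.mem_univ _)) ?_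
    intro g hg
    obtain ⟨s, -, rfl⟩ := List.mem_map.mp (List.mem_toFinset.mp hg)
    exact Finset.mem_image_of_mem _ (Finset.mem_univ _)
  · rw [Finset.card_image_of_injective _ hec, Finset.card_univ, Fintype.card_fin,
      Finset.card_insert_of_notMem (by simpa using hej),
      List.toFinset_card_of_nodup (hw.nodup_edges hvs), List.length_map, List.length_range]
    omega

section Cuts

variable [Fintype E]

theorem three_le_cutDeg {X : Finset V} {f₁ f₂ f₃ : E} (h₁₂ : f₁ ≠ f₂) (h₁₃ : f₁ ≠ f₃)
    (h₂₃ : f₂ ≠ f₃) (h₁ : CrossesEdge ends X f₁) (h₂ : CrossesEdge ends X f₂)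
    (h₃ : CrossesEdge ends X f₃) : 3 ≤ cutDeg ends X := by
  have hsub : ({f₁, f₂, f₃} : Finset E) ⊆ Finset.univ.filter (CrossesEdge ends X) := by
    simp [Finset.insert_subset_iff, h₁, h₂, h₃]
  calc 3 = ({f₁, f₂, f₃} : Finset E).card :=
        (Finset.card_eq_three.mpr ⟨f₁, f₂, f₃, h₁₂, h₁₃, h₂₃, rfl⟩).symm
    _ ≤ cutDeg ends X := Finset.card_le_card hsub

theorem exists_walk_not_mem_of_two_le_cutDeg [Fintype V]
    (h2ec : ∀ X : Finset V, X ≠ ∅ → X ≠ Finset.univ → 2 ≤ cutDeg ends X) (e : E) (u w : V) :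
    ∃ es vs, IsWalk ends w u es vs ∧ e ∉ es := by
  by_contra hu
  -- otherwise `e` is the only edge leaving the nodes reachable from `w` without `e`
  let X := Finset.univ.filter fun z => ∃ es vs, IsWalk ends w z es vs ∧ e ∉ es
  have hwX : w ∈ X := Finset.mem_filter.mpr ⟨Finset.mem_univ w, [], [w], .nil w, by simp⟩
  have huX : u ∉ X := fun h => hu (Finset.mem_filter.mp h).2
  have hcut : Finset.univ.filter (CrossesEdge ends X) ⊆ {e} := by
    intro g hg
    obtain ⟨a, b, hab, haX, hbX⟩ := (Finset.mem_filter.mp hg).2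
    obtain ⟨es, vs, hw, hes⟩ := (Finset.mem_filter.mp haX).2
    by_contra hge
    exact hbX (Finset.mem_filter.mpr ⟨Finset.mem_univ b, es ++ [g], vs ++ [b], hw.snoc hab,
      by simpa [Ne.symm (Finset.mem_singleton.not.mp hge)] using hes⟩)
  have h2 := h2ec X (Finset.ne_empty_of_mem hwX) (fun h => huX (h ▸ Finset.mem_univ u))
  have h1 := (Finset.card_le_card hcut).trans_eq (Finset.card_singleton e)
  exact absurd (h2.trans h1) (by norm_num)

theorem exists_isCircuit_mem [Fintype V] (hloopless : ∀ e : E, ¬ (ends e).IsDiag)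
    (h2ec : ∀ X : Finset V, X ≠ ∅ → X ≠ Finset.univ → 2 ≤ cutDeg ends X) (e : E) :
    ∃ C, IsCircuit ends C ∧ e ∈ C := by
  obtain ⟨u, w, he⟩ : ∃ u w, ends e = s(u, w) := Sym2.exists.mp ⟨ends e, rfl⟩
  have hwu : w ≠ u := fun h => hloopless e (by simp [he, h])
  obtain ⟨es, vs, hw, hes⟩ := exists_walk_not_mem_of_two_le_cutDeg h2ec e u w
  obtain ⟨es', vs', hw', hvs', hsub⟩ := hw.exists_nodup
  exact ⟨_, isCircuit_insert_of_path hw' hvs' hwu he (fun h => hes (hsub h)),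
    Finset.mem_insert_self e _⟩

theorem _root_.IsCircuit.subset_of_mem
    (hsep : ∀ x y : V, x ≠ y → ∃ X : Finset V, x ∈ X ∧ y ∉ X ∧ cutDeg ends X ≤ 2)
    {K L : Finset E} {e : E} (hK : IsCircuit ends K) (hL : IsCircuit ends L)
    (heK : e ∈ K) (heL : e ∈ L) : L ⊆ K := by
  intro f hfL
  by_contra hfK
  obtain ⟨u, w, qs, qvs, he, hq, hqvs, heq, rfl⟩ := hK.exists_path heK
  obtain ⟨u', w', ps, pvs, he', hp, hpvs, -, rfl⟩ := hL.exists_path heL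
  have hcyc : IsWalk ends u u (e :: qs) (u :: qvs) := .cons he hq
  have hcyc_nodup : (e :: qs).Nodup := List.nodup_cons.mpr ⟨heq, hq.nodup_edges hqvs⟩
  have hK_mem : ∀ g, g ∈ insert e qs.toFinset ↔ g ∈ e :: qs := by simp
  have hK_verts : ∀ g ∈ {g | g ∈ e :: qs}, ∀ x y, ends g = s(x, y) → y ∈ {v | v ∈ u :: qvs} :=
    fun g hg x y hxy => hcyc.mem_of_mem_edges hg hxy
  have hfp : f ∈ ps := by
    rcases Finset.mem_insert.mp hfL with rfl | hf
    · exact absurd heK hfK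
    · exact List.mem_toFinset.mp hf
  obtain ⟨x, hx, y, hy, hxy, rs, rvs, hr, hrK⟩ :=
    hp.exists_ear hK_verts hpvs (hK_verts e List.mem_cons_self u' w' he')
      (hK_verts e List.mem_cons_self w' u' (he'.trans Sym2.eq_swap)) hfp
      (fun h => hfK ((hK_mem f).mpr h))
  obtain ⟨X, hxX, hyX, hcut⟩ := hsep x y hxy
  obtain ⟨f₁, hf₁, f₂, hf₂, h₁₂, hc₁, hc₂⟩ := hcyc.exists_two_crossesEdge hcyc_nodup hx hy hxX hyX
  obtain ⟨f₃, hf₃, hc₃⟩ := hr.exists_crossesEdge hxX hyX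
  have h₁₃ : f₁ ≠ f₃ := ne_of_mem_of_not_mem hf₁ (hrK f₃ hf₃)
  have h₂₃ : f₂ ≠ f₃ := ne_of_mem_of_not_mem hf₂ (hrK f₃ hf₃)
  have := three_le_cutDeg h₁₂ h₁₃ h₂₃ hc₁ hc₂ hc₃
  omega

end Cuts

end Multigraph

theorem cactus_of_no_three_inseparable_general {V E : Type*} [Fintype V] [Fintype E]
    (ends : E → Sym2 V) (hloopless : ∀ e : E, ¬ (ends e).IsDiag)
    (h2ec : ∀ X : Finset V, X ≠ ∅ → X ≠ Finset.univ → 2 ≤ cutDeg ends X)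
    (hsep : ∀ x y : V, x ≠ y →
      ∃ X : Finset V, x ∈ X ∧ y ∉ X ∧ cutDeg ends X ≤ 2) :
    ∀ e : E, ∃! C : Finset E, IsCircuit ends C ∧ e ∈ C := by
  intro e
  obtain ⟨C, hC, heC⟩ := Multigraph.exists_isCircuit_mem hloopless h2ec e
  exact ⟨C, ⟨hC, heC⟩, fun C' ⟨hC', heC'⟩ =>
    (hC.subset_of_mem hsep hC' heC heC').antisymm (hC'.subset_of_mem hsep hC heC' heC)⟩

/-- Let `G = (V, E)` be a 2-edge-connected multigraph in which every 3-inseparable set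
is a singleton, i.e. any two distinct nodes are separated by a cut of at most 2 edges.
Then `G` is a cactus: every edge belongs to exactly one circuit. -/
theorem cactus_of_no_three_inseparable {V E : Type*} [Fintype V] [Fintype E]
    (ends : E → Sym2 V) (hloopless : ∀ e : E, ¬ (ends e).IsDiag)
    (hV : 2 ≤ Fintype.card V)
    (h2ec : ∀ X : Finset V, X ≠ ∅ → X ≠ Finset.univ → 2 ≤ cutDeg ends X)
    (hsep : ∀ x y : V, x ≠ y →
      ∃ X : Finset V, x ∈ X ∧ y ∉ X ∧ cutDeg ends X ≤ 2) :
    ∀ e : E, ∃! C : Finset E, IsCircuit ends C ∧ e ∈ C :=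
  cactus_of_no_three_inseparable_general ends hloopless h2ec hsep
end

section
/- Let (V,E) be a forest with connected components (V₁,E₁), …, (V_r,E_r), and let F be a finite multiset of unordered pairs of distinct nodes of V (links) such that (V, E ∪ F) is 2-edge-connected. Fix e ∈ E ∪ F and let C be a circuit of (V, E ∪ F) containing e that minimizes |C ∩ F| among all circuits containing e. Then for every index i such that C contains a node of V_i: the intersection C ∩ E_i is the edge set of a (possibly empty) path, and C contains either exactly one link of F with both endpoints in V_i and no link with exactly one endpoint in V_i, or exactly two links of F each having exactly one endpoint in V_i and no link with both endpoints in V_i. -/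
open scoped Classical

/-- Walks in a multigraph, as lists of edges with compatible endpoints. -/
inductive MWalk {V E : Type*} (ends : E → Sym2 V) : V → V → Type _
  | nil (v : V) : MWalk ends v v
  | cons {u v w : V} (e : E) (h : ends e = s(u, v)) (p : MWalk ends v w) :
      MWalk ends u w

namespace MWalk
variable {V E : Type*} {ends : E → Sym2 V}

/-- The list of nodes traversed by a walk. -/
def support : ∀ {u v : V}, MWalk ends u v → List V
  | _, _, nil v => [v]
  | u, _, cons _ _ p => u :: p.support

/-- The list of edges traversed by a walk. -/
def edgeList : ∀ {u v : V}, MWalk ends u v → List E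
  | _, _, nil _ => []
  | _, _, cons e _ p => e :: p.edgeList

/-- A walk is a path if it traverses no node twice. -/
def IsPath {u v : V} (p : MWalk ends u v) : Prop := p.support.Nodup

end MWalk

/-!
Rotate the circuit so that `e₀` is its last edge; the other edges form a path
`vn 0, …, vn (m - 1)`. If a link lay on this path between two nodes joined by a forest walk
avoiding `e₀`, replacing that stretch by the walk would give a circuit through `e₀` with fewer
links. Hence every class of the forest minus `e₀` meets the path in an interval spanned by forest
edges. A component of the forest is one such class, or, when `e₀` is one of its edges, the union
of the two classes containing the ends of `e₀`. Either way its nodes on the circuit form a single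
arc of forest edges bounded by links: one link inside the component if the arc covers the whole
circuit, two crossing links otherwise.
-/

namespace MWalk

variable {V E : Type*} {ends : E → Sym2 V}

def append : ∀ {u v w : V}, MWalk ends u v → MWalk ends v w → MWalk ends u w
  | _, _, _, nil _, q => q
  | _, _, _, cons e h p, q => cons e h (p.append q)

def reverse : ∀ {u v : V}, MWalk ends u v → MWalk ends v u
  | _, _, nil v => nil v
  | _, _, cons e h p => p.reverse.append (cons e (by rw [h, Sym2.eq_swap]) (nil _))

def map {E' : Type*} {ends' : E' → Sym2 V} (φ : E → E') (hφ : ∀ g, ends' (φ g) = ends g) :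
    ∀ {u v : V}, MWalk ends u v → MWalk ends' u v
  | _, _, nil v => nil v
  | _, _, cons e h p => cons (φ e) (by rw [hφ, h]) (map φ hφ p)

@[simp] lemma support_nil (v : V) : (nil v : MWalk ends v v).support = [v] := rfl

@[simp] lemma support_cons {u v w : V} (e : E) (h : ends e = s(u, v)) (p : MWalk ends v w) :
    (cons e h p).support = u :: p.support := rfl

@[simp] lemma edgeList_nil (v : V) : (nil v : MWalk ends v v).edgeList = [] := rfl

@[simp] lemma edgeList_cons {u v w : V} (e : E) (h : ends e = s(u, v)) (p : MWalk ends v w) :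
    (cons e h p).edgeList = e :: p.edgeList := rfl

@[simp] lemma edgeList_append {u v w : V} (p : MWalk ends u v) (q : MWalk ends v w) :
    (p.append q).edgeList = p.edgeList ++ q.edgeList := by
  induction p with
  | nil => rfl
  | cons e h p ih => simp [append, ih]

lemma support_eq_cons {u v : V} (p : MWalk ends u v) : p.support = u :: p.support.tail := by
  cases p <;> rfl

lemma support_append {u v w : V} (p : MWalk ends u v) (q : MWalk ends v w) :
    (p.append q).support = p.support ++ q.support.tail := by
  induction p with
  | nil => exact q.support_eq_cons
  | cons e h p ih => simp [append, ih]

@[simp] lemma mem_edgeList_reverse {u v : V} (p : MWalk ends u v) {g : E} :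
    g ∈ p.reverse.edgeList ↔ g ∈ p.edgeList := by
  induction p with
  | nil => simp [reverse]
  | cons e h p ih => simp [reverse, ih, or_comm]

@[simp] lemma edgeList_map {E' : Type*} {ends' : E' → Sym2 V} (φ : E → E')
    (hφ : ∀ g, ends' (φ g) = ends g) {u v : V} (p : MWalk ends u v) :
    (p.map φ hφ).edgeList = p.edgeList.map φ := by
  induction p with
  | nil => rfl
  | cons e h p ih => simp [map, ih]

lemma length_support {u v : V} (p : MWalk ends u v) :
    p.support.length = p.edgeList.length + 1 := by
  induction p with
  | nil => rfl
  | cons e h p ih => simp [ih]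

lemma getElem_support_zero {u v : V} (p : MWalk ends u v) (h : 0 < p.support.length) :
    p.support[0] = u := by
  cases p <;> rfl

lemma getElem_support_length {u v : V} (p : MWalk ends u v)
    (h : p.edgeList.length < p.support.length) : p.support[p.edgeList.length] = v := by
  induction p with
  | nil => rfl
  | cons e h p ih => simpa using ih (by rw [length_support]; omega)

lemma ends_getElem_edgeList {u v : V} (p : MWalk ends u v) (i : ℕ) (hi : i < p.edgeList.length) :
    ends p.edgeList[i] = s(p.support[i]'(by rw [length_support]; omega),
      p.support[i + 1]'(by rw [length_support]; omega)) := by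
  induction p generalizing i with
  | nil => simp at hi
  | cons e h p ih =>
    cases i with
    | zero => simpa [getElem_support_zero] using h
    | succ i => simpa using ih i (by simpa using hi)

lemma mem_support_of_mem_edgeList {u v : V} (p : MWalk ends u v) {g : E} {w : V}
    (hg : g ∈ p.edgeList) (hw : w ∈ ends g) : w ∈ p.support := by
  induction p with
  | nil => simp at hg
  | @cons a b c e h p ih =>
    rcases List.mem_cons.1 hg with rfl | hg
    · rw [h, Sym2.mem_iff] at hw
      rcases hw with rfl | rfl
      · exact List.mem_cons_self
      · rw [support_cons, p.support_eq_cons]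
        exact List.mem_cons_of_mem _ List.mem_cons_self
    · exact List.mem_cons_of_mem _ (ih hg)

lemma IsPath.nodup_edgeList {u v : V} {p : MWalk ends u v} (hp : p.IsPath) : p.edgeList.Nodup := by
  induction p with
  | nil => simp
  | @cons a b c e h p ih =>
    rw [IsPath, support_cons, List.nodup_cons] at hp
    refine List.nodup_cons.2 ⟨fun he => hp.1 ?_, ih hp.2⟩
    exact p.mem_support_of_mem_edgeList he (by rw [h]; exact Sym2.mem_mk_left _ _)

lemma exists_suffix_of_mem_support {u v : V} (p : MWalk ends u v) {x : V} (hx : x ∈ p.support) :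
    ∃ q : MWalk ends x v, q.support.Sublist p.support ∧ q.edgeList ⊆ p.edgeList := by
  induction p with
  | nil =>
    obtain rfl := List.mem_singleton.1 hx
    exact ⟨nil _, .refl _, fun _ h => h⟩
  | @cons a b c e h p ih =>
    rcases List.mem_cons.1 hx with rfl | hx
    · exact ⟨cons e h p, .refl _, fun _ h => h⟩
    · obtain ⟨q, hs, he⟩ := ih hx
      exact ⟨q, hs.cons _, List.Subset.trans he (List.subset_cons_self _ _)⟩

lemma exists_isPath {u v : V} (p : MWalk ends u v) :
    ∃ q : MWalk ends u v, q.IsPath ∧ q.edgeList ⊆ p.edgeList := by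
  induction p with
  | nil v => exact ⟨nil v, List.nodup_singleton v, fun _ h => h⟩
  | @cons a b c e h p ih =>
    obtain ⟨q, hq, he⟩ := ih
    by_cases ha : a ∈ q.support
    · obtain ⟨q', hs, he'⟩ := q.exists_suffix_of_mem_support ha
      exact ⟨q', hs.nodup hq,
        List.Subset.trans (List.Subset.trans he' he) (List.subset_cons_self _ _)⟩
    · exact ⟨cons e h q, List.nodup_cons.2 ⟨ha, hq⟩, List.cons_subset_cons _ he⟩

end MWalk

section Reachability

variable {V E : Type*} {ends : E → Sym2 V} {P : E → Prop}

def ReachableVia (ends : E → Sym2 V) (P : E → Prop) (x y : V) : Prop :=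
  ∃ p : MWalk ends x y, ∀ g ∈ p.edgeList, P g

namespace ReachableVia

lemma refl (x : V) : ReachableVia ends P x x := ⟨.nil x, by simp⟩

lemma of_ends {g : E} {x y : V} (hg : ends g = s(x, y)) (hP : P g) : ReachableVia ends P x y :=
  ⟨.cons g hg (.nil y), by simpa using hP⟩

lemma trans {x y z : V} : ReachableVia ends P x y → ReachableVia ends P y z →
    ReachableVia ends P x z := by
  rintro ⟨p, hp⟩ ⟨q, hq⟩
  exact ⟨p.append q, by simpa [or_imp, forall_and] using And.intro hp hq⟩

lemma symm {x y : V} : ReachableVia ends P x y → ReachableVia ends P y x := by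
  rintro ⟨p, hp⟩
  exact ⟨p.reverse, by simpa using hp⟩

lemma nonempty {x y : V} : ReachableVia ends P x y → Nonempty (MWalk ends x y) :=
  fun ⟨p, _⟩ => ⟨p⟩

lemma map {E' : Type*} {ends' : E' → Sym2 V} {P' : E' → Prop} (φ : E → E')
    (hφ : ∀ g, ends' (φ g) = ends g) (hP : ∀ g, P g → P' (φ g)) {x y : V} :
    ReachableVia ends P x y → ReachableVia ends' P' x y := by
  rintro ⟨p, hp⟩
  exact ⟨p.map φ hφ, by simpa using fun g hg => hP g (hp g hg)⟩

lemma of_seq {vs : ℕ → V} {es : ℕ → E} (hends : ∀ t, ends (es t) = s(vs t, vs (t + 1)))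
    {a b : ℕ} (hab : a ≤ b) (hP : ∀ t, a ≤ t → t < b → P (es t)) :
    ReachableVia ends P (vs a) (vs b) := by
  induction b, hab using Nat.le_induction with
  | base => exact refl _
  | succ b hab ih =>
    exact (ih fun t h₁ h₂ => hP t h₁ (by omega)).trans
      (of_ends (hends b) (hP b hab (by omega)))

end ReachableVia

/-- Following a walk until its first edge outside `P`. -/
lemma MWalk.reachableVia_or_exists_not {x y : V} (p : MWalk ends x y) (P : E → Prop) :
    ReachableVia ends P x y ∨ ∃ g, ¬ P g ∧ ∃ c ∈ ends g, ReachableVia ends P x c := by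
  induction p with
  | nil => exact .inl (.refl _)
  | @cons a b c e h p ih =>
    by_cases he : P e
    · refine ih.imp (ReachableVia.of_ends h he).trans ?_
      rintro ⟨g, hg, c, hc, hr⟩
      exact ⟨g, hg, c, hc, (ReachableVia.of_ends h he).trans hr⟩
    · exact .inr ⟨e, he, a, by rw [h]; exact Sym2.mem_mk_left _ _, .refl _⟩

lemma MWalk.nonempty_of_ends {g : E} {x y z : V}
    (hg : ends g = s(x, y)) : Nonempty (MWalk ends x z) → Nonempty (MWalk ends y z) :=
  fun ⟨p⟩ => ⟨.cons g (hg.trans Sym2.eq_swap) p⟩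

lemma nonempty_walk_iff_reachableVia {v z : V}
    (hfar : ∀ g, ¬ P g → ∀ c ∈ ends g, ¬ Nonempty (MWalk ends c v))
    (hz : Nonempty (MWalk ends z v)) (x : V) :
    Nonempty (MWalk ends x v) ↔ ReachableVia ends P x z := by
  obtain ⟨p₀⟩ := hz
  refine ⟨fun ⟨p⟩ => ?_, fun h => ?_⟩
  · refine ((p.append p₀.reverse).reachableVia_or_exists_not P).resolve_right ?_
    rintro ⟨g, hg, c, hgc, hxc⟩
    obtain ⟨q⟩ := hxc.nonempty
    exact hfar g hg c hgc ⟨q.reverse.append p⟩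
  · obtain ⟨q⟩ := h.nonempty
    exact ⟨q.append p₀⟩

lemma nonempty_walk_iff_reachableVia_or {f : E} {a b v : V} (hP : ∀ g, ¬ P g → g = f)
    (hf : ends f = s(a, b)) (hb : Nonempty (MWalk ends b v)) (x : V) :
    Nonempty (MWalk ends x v) ↔ ReachableVia ends P x a ∨ ReachableVia ends P x b := by
  obtain ⟨p₀⟩ := hb
  refine ⟨fun ⟨p⟩ => ?_, ?_⟩
  · refine ((p.append p₀.reverse).reachableVia_or_exists_not P).elim .inr ?_
    rintro ⟨g, hg, c, hgc, hxc⟩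
    obtain rfl := hP g hg
    rw [hf, Sym2.mem_iff] at hgc
    rcases hgc with rfl | rfl
    · exact .inl hxc
    · exact .inr hxc
  · rintro (h | h) <;> obtain ⟨q⟩ := h.nonempty
    · exact ⟨q.append (.cons f hf p₀)⟩
    · exact ⟨q.append p₀⟩

end Reachability

section Circuits

variable {V E : Type*} {ends : E → Sym2 V}

lemma MWalk.IsPath.isCircuit_insert {x y : V} {p : MWalk ends x y} (hp : p.IsPath) (hxy : x ≠ y)
    {e₀ : E} (h₀ : ends e₀ = s(y, x)) (he₀ : e₀ ∉ p.edgeList) :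
    IsCircuit ends (insert e₀ p.edgeList.toFinset) := by
  obtain ⟨n, hn⟩ : ∃ n, p.edgeList.length = n := ⟨_, rfl⟩
  have hsupp : p.support.length = n + 1 := hn ▸ p.length_support
  have hfirst : p.support[0] = x := p.getElem_support_zero (by omega)
  have hlast : p.support[n] = y := by simpa only [hn] using p.getElem_support_length (by omega)
  have hn0 : n ≠ 0 := by
    rintro rfl
    exact hxy (hfirst.symm.trans hlast)
  have hes : (p.edgeList ++ [e₀]).length = n + 1 := by simp [hn]
  have hnodup : (p.edgeList ++ [e₀]).Nodup := List.nodup_append.2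
    ⟨hp.nodup_edgeList, List.nodup_singleton _,
      fun a ha b hb hab => he₀ (List.mem_singleton.1 hb ▸ hab ▸ ha)⟩
  refine ⟨n + 1, by omega, fun i => (p.edgeList ++ [e₀])[i.1]'(by omega),
    fun i => p.support[i.1]'(by omega),
    fun i j h => Fin.ext ((List.Nodup.getElem_inj_iff hnodup).1 h),
    fun i j h => Fin.ext ((List.Nodup.getElem_inj_iff hp).1 h), fun i => ?_, ?_⟩
  · rcases Nat.lt_or_ge i.1 n with hi | hi
    · simp only [List.getElem_append_left (show i.1 < p.edgeList.length by omega),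
        Nat.mod_eq_of_lt (show i.1 + 1 < n + 1 by omega)]
      exact p.ends_getElem_edgeList i (by omega)
    · obtain ⟨i, hi'⟩ := i
      obtain rfl : i = n := by simp only at hi; omega
      simp only [List.getElem_append_right (le_of_eq hn), hn, Nat.sub_self,
        List.getElem_singleton, Nat.mod_self, h₀, hfirst, hlast]
  · ext g
    simp only [Finset.mem_insert, List.mem_toFinset, Finset.mem_image, Finset.mem_univ, true_and]
    rw [← List.mem_singleton, or_comm, ← List.mem_append, List.mem_iff_getElem]
    exact ⟨fun ⟨i, hi, h⟩ => ⟨⟨i, by omega⟩, h⟩,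
      fun ⟨i, h⟩ => ⟨i, by omega, h⟩⟩

lemma exists_isCircuit_of_reachableVia {P : E → Prop} {x y : V} (h : ReachableVia ends P x y)
    (hxy : x ≠ y) {e₀ : E} (h₀ : ends e₀ = s(y, x)) (hP₀ : ¬ P e₀) :
    ∃ C, IsCircuit ends C ∧ e₀ ∈ C ∧ ∀ c ∈ C, c = e₀ ∨ P c := by
  obtain ⟨w, hw⟩ := h
  obtain ⟨p, hp, hsub⟩ := w.exists_isPath
  refine ⟨_, hp.isCircuit_insert hxy h₀ fun h => hP₀ (hw _ (hsub h)),
    Finset.mem_insert_self _ _, fun c hc => ?_⟩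
  rcases Finset.mem_insert.1 hc with rfl | hc
  · exact .inl rfl
  · exact .inr (hw c (hsub (List.mem_toFinset.1 hc)))

lemma IsCircuit.exists_isRight {L : Type*} {endsL : L → Sym2 V}
    (hforest : ∀ C : Finset E, ¬ IsCircuit ends C) {C : Finset (E ⊕ L)}
    (hC : IsCircuit (Sum.elim ends endsL) C) : ∃ x ∈ C, x.isRight := by
  by_contra! hall
  obtain ⟨m, hm, e, v, he, hv, hends, rfl⟩ := hC
  have hleft (i : Fin m) : ∃ g, e i = Sum.inl g := by
    have := hall (e i) (by simp)
    cases h : e i <;> simp_all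
  choose g hg using hleft
  refine hforest _ ⟨m, hm, g, v, fun i j hij => he (by rw [hg, hg, hij]), hv, fun i => ?_, rfl⟩
  simpa [hg] using hends i

end Circuits

/-- The circuit `C` traversed cyclically: `en j` joins `vn j` to `vn (j + 1)`, and both sequences
have exact period `m`. -/
structure CircuitEnum {V X : Type*} (G : X → Sym2 V) (C : Finset X) (m : ℕ) (vn : ℕ → V)
    (en : ℕ → X) : Prop where
  two_le : 2 ≤ m
  ends_eq : ∀ j, G (en j) = s(vn j, vn (j + 1))
  vn_eq_iff : ∀ i j, vn i = vn j ↔ i ≡ j [MOD m]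
  en_eq_iff : ∀ i j, en i = en j ↔ i ≡ j [MOD m]
  mem_iff : ∀ x, x ∈ C ↔ ∃ j, en j = x

lemma IsCircuit.exists_circuitEnum {V X : Type*} {G : X → Sym2 V} {C : Finset X}
    (hC : IsCircuit G C) : ∃ m vn en, CircuitEnum G C m vn en := by
  obtain ⟨m, hm, e, v, he, hv, hends, rfl⟩ := hC
  have hm0 : 0 < m := by omega
  refine ⟨m, fun i => v ⟨i % m, Nat.mod_lt _ hm0⟩, fun i => e ⟨i % m, Nat.mod_lt _ hm0⟩,
    ⟨hm, fun j => ?_, fun i j => hv.eq_iff.trans Fin.ext_iff,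
      fun i j => he.eq_iff.trans Fin.ext_iff, fun x => ?_⟩⟩
  · simpa only [Nat.mod_add_mod] using hends ⟨j % m, Nat.mod_lt _ hm0⟩
  · simp only [Finset.mem_image, Finset.mem_univ, true_and]
    exact ⟨fun ⟨i, hi⟩ => ⟨i, by simpa [Nat.mod_eq_of_lt i.2] using hi⟩,
      fun ⟨j, hj⟩ => ⟨_, hj⟩⟩

namespace CircuitEnum

variable {V X : Type*} {G : X → Sym2 V} {C : Finset X} {m : ℕ} {vn : ℕ → V} {en : ℕ → X}

lemma vn_add_period (hc : CircuitEnum G C m vn en) (i : ℕ) : vn (i + m) = vn i :=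
  (hc.vn_eq_iff _ _).2 (Nat.add_mod_right i m)

lemma en_add_period (hc : CircuitEnum G C m vn en) (i : ℕ) : en (i + m) = en i :=
  (hc.en_eq_iff _ _).2 (Nat.add_mod_right i m)

lemma vn_injOn (hc : CircuitEnum G C m vn en) {i j : ℕ} (hi : i < m) (hj : j < m)
    (h : vn i = vn j) : i = j :=
  ((hc.vn_eq_iff i j).1 h).eq_of_lt_of_lt hi hj

lemma en_injOn (hc : CircuitEnum G C m vn en) {i j : ℕ} (hi : i < m) (hj : j < m)
    (h : en i = en j) : i = j :=
  ((hc.en_eq_iff i j).1 h).eq_of_lt_of_lt hi hj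

lemma en_mem (hc : CircuitEnum G C m vn en) (j : ℕ) : en j ∈ C := (hc.mem_iff _).2 ⟨j, rfl⟩

lemma exists_lt_of_mem (hc : CircuitEnum G C m vn en) {x : X} (hx : x ∈ C) :
    ∃ j < m, en j = x := by
  obtain ⟨j, rfl⟩ := (hc.mem_iff x).1 hx
  exact ⟨j % m, Nat.mod_lt _ (by have := hc.two_le; omega),
    (hc.en_eq_iff _ _).2 (Nat.mod_modEq j m)⟩

lemma ends_last (hc : CircuitEnum G C m vn en) : G (en (m - 1)) = s(vn (m - 1), vn 0) := by
  have h := hc.vn_add_period 0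
  rw [zero_add] at h
  rw [hc.ends_eq, Nat.sub_add_cancel (by have := hc.two_le; omega), h]

lemma exists_vn_eq_of_mem_ends (hc : CircuitEnum G C m vn en) {x : X} {w : V} (hx : x ∈ C)
    (hw : w ∈ G x) : ∃ i < m, vn i = w := by
  obtain ⟨j, rfl⟩ := (hc.mem_iff x).1 hx
  rw [hc.ends_eq, Sym2.mem_iff] at hw
  obtain ⟨i, rfl⟩ : ∃ i, vn i = w :=
    hw.elim (fun h => ⟨j, h.symm⟩) fun h => ⟨j + 1, h.symm⟩
  exact ⟨i % m, Nat.mod_lt _ (by have := hc.two_le; omega),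
    (hc.vn_eq_iff _ _).2 (Nat.mod_modEq i m)⟩

lemma rotate (hc : CircuitEnum G C m vn en) (r : ℕ) :
    CircuitEnum G C m (fun i => vn (r + i)) (fun i => en (r + i)) where
  two_le := hc.two_le
  ends_eq j := hc.ends_eq (r + j)
  vn_eq_iff i j := (hc.vn_eq_iff _ _).trans ⟨Nat.ModEq.add_left_cancel' r, Nat.ModEq.add_left r⟩
  en_eq_iff i j := (hc.en_eq_iff _ _).trans ⟨Nat.ModEq.add_left_cancel' r, Nat.ModEq.add_left r⟩
  mem_iff x := by
    refine (hc.mem_iff x).trans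
      ⟨fun ⟨j, hj⟩ => ⟨j + m * r - r, ?_⟩, fun ⟨j, hj⟩ => ⟨r + j, hj⟩⟩
    have : r ≤ m * r := Nat.le_mul_of_pos_left r (by have := hc.two_le; omega)
    rw [← hj, show r + (j + m * r - r) = j + m * r by omega]
    exact (hc.en_eq_iff _ _).2 (Nat.add_mul_mod_self_left j m r)

lemma exists_rotate_last (hc : CircuitEnum G C m vn en) {x : X} (hx : x ∈ C) :
    ∃ vn' en', CircuitEnum G C m vn' en' ∧ en' (m - 1) = x := by
  obtain ⟨j, -, rfl⟩ := hc.exists_lt_of_mem hx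
  refine ⟨_, _, hc.rotate (j + 1), ?_⟩
  rw [show j + 1 + (m - 1) = j + m by have := hc.two_le; omega]
  exact hc.en_add_period j

end CircuitEnum

lemma MWalk.exists_of_seq {V E L : Type*} {ends : E → Sym2 V} {endsL : L → Sym2 V}
    {vn : ℕ → V} {en : ℕ → E ⊕ L}
    (hends : ∀ t, Sum.elim ends endsL (en t) = s(vn t, vn (t + 1)))
    {k : ℕ} (hk : ∀ t < k, (en t).isLeft) :
    ∃ W : MWalk ends (vn 0) (vn k), W.support = (List.range (k + 1)).map vn ∧
      W.edgeList.map Sum.inl = (List.range k).map en := by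
  induction k with
  | zero => exact ⟨.nil _, rfl, rfl⟩
  | succ k ih =>
    obtain ⟨W, hsupp, hedges⟩ := ih fun t ht => hk t (by omega)
    obtain ⟨g, hg⟩ := Sum.isLeft_iff.1 (hk k (by omega))
    have hends : ends g = s(vn k, vn (k + 1)) := by simpa [hg] using hends k
    refine ⟨W.append (.cons g hends (.nil _)), ?_, ?_⟩
    · rw [MWalk.support_append, hsupp, List.range_succ (n := k + 1)]
      simp
    · simp [hedges, List.range_succ, hg]

section ComponentArc

variable {V E L : Type*} {ends : E → Sym2 V} {endsL : L → Sym2 V} {C : Finset (E ⊕ L)}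
  {m : ℕ} {vn : ℕ → V} {en : ℕ → E ⊕ L}

structure IsComponentArc (K : V → Prop) (m : ℕ) (vn : ℕ → V) (en : ℕ → E ⊕ L) (k : ℕ) :
    Prop where
  lt : k < m
  mem_iff : ∀ t < m, K (vn t) ↔ t ≤ k
  isLeft : ∀ t < k, (en t).isLeft
  isRight : (en k).isRight

namespace IsComponentArc

variable {K : V → Prop} {k : ℕ}

lemma of_interval (hc : CircuitEnum (Sum.elim ends endsL) C m vn en) {u w : ℕ} (huw : u ≤ w)
    (hwm : w < m) (hK : ∀ i < m, K (vn i) ↔ u ≤ i ∧ i ≤ w)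
    (hleft : ∀ j, u ≤ j → j < w → (en j).isLeft) (hright : (en w).isRight) :
    IsComponentArc K m (fun t => vn (u + t)) (fun t => en (u + t)) (w - u) where
  lt := by omega
  mem_iff t ht := by
    rcases Nat.lt_or_ge (u + t) m with h | h
    · rw [hK _ h]
      omega
    · rw [← Nat.sub_add_cancel h, hc.vn_add_period, hK _ (by omega)]
      omega
  isLeft t ht := hleft _ (by omega) (by omega)
  isRight := by rwa [show u + (w - u) = w by omega]

lemma of_wrap (hc : CircuitEnum (Sum.elim ends endsL) C m vn en) {w u : ℕ} (hwu : w < u)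
    (hum : u < m) (hK : ∀ i < m, K (vn i) ↔ i ≤ w ∨ u ≤ i)
    (hleft : ∀ j < m, j < w ∨ u ≤ j → (en j).isLeft) (hright : (en w).isRight) :
    IsComponentArc K m (fun t => vn (u + t)) (fun t => en (u + t)) (m - u + w) where
  lt := by omega
  mem_iff t ht := by
    rcases Nat.lt_or_ge (u + t) m with h | h
    · rw [hK _ h]
      omega
    · rw [← Nat.sub_add_cancel h, hc.vn_add_period, hK _ (by omega)]
      omega
  isLeft t ht := by
    rcases Nat.lt_or_ge (u + t) m with h | h
    · exact hleft _ h (by omega)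
    · rw [← Nat.sub_add_cancel h, hc.en_add_period]
      exact hleft _ (by omega) (by omega)
  isRight := by rwa [show u + (m - u + w) = w + m by omega, hc.en_add_period]

lemma mem_iff_succ (hc : CircuitEnum (Sum.elim ends endsL) C m vn en)
    (ha : IsComponentArc K m vn en k) {t : ℕ} (ht : t < m) :
    K (vn (t + 1)) ↔ t + 1 ≤ k ∨ t = m - 1 := by
  rcases Nat.lt_or_ge (t + 1) m with h | h
  · rw [ha.mem_iff _ h]
    omega
  · have hv : vn (t + 1) = vn 0 := by
      rw [show t + 1 = 0 + m by omega, hc.vn_add_period]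
    rw [hv, ha.mem_iff 0 (by omega)]
    omega

lemma inl_mem_iff (hc : CircuitEnum (Sum.elim ends endsL) C m vn en)
    (hK : ∀ g x y, ends g = s(x, y) → K x → K y) (ha : IsComponentArc K m vn en k) (g : E) :
    (Sum.inl g ∈ C ∧ ∃ w, w ∈ ends g ∧ K w) ↔ ∃ t < k, en t = Sum.inl g := by
  constructor
  · rintro ⟨hgC, w, hw, hKw⟩
    obtain ⟨j, hj, hjg⟩ := hc.exists_lt_of_mem hgC
    have hends : ends g = s(vn j, vn (j + 1)) := by simpa [hjg] using hc.ends_eq j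
    have hKj : K (vn j) := by
      rw [hends, Sym2.mem_iff] at hw
      rcases hw with rfl | rfl
      · exact hKw
      · exact hK g _ _ (hends.trans (Sym2.eq_swap)) hKw
    refine ⟨j, lt_of_le_of_ne ((ha.mem_iff j hj).1 hKj) ?_, hjg⟩
    rintro rfl
    simpa [hjg] using ha.isRight
  · rintro ⟨t, ht, htg⟩
    refine ⟨htg ▸ hc.en_mem t, vn t, ?_, (ha.mem_iff t (by have := ha.lt; omega)).2 ht.le⟩
    have hends : ends g = s(vn t, vn (t + 1)) := by simpa [htg] using hc.ends_eq t
    exact hends ▸ Sym2.mem_mk_left _ _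

theorem exists_isPath_eq [Fintype E] (hc : CircuitEnum (Sum.elim ends endsL) C m vn en)
    (hK : ∀ g x y, ends g = s(x, y) → K x → K y) (ha : IsComponentArc K m vn en k) :
    ∃ (a b : V) (pw : MWalk ends a b), pw.IsPath ∧
      Finset.univ.filter (fun e : E => Sum.inl e ∈ C ∧ ∃ w, w ∈ ends e ∧ K w)
        = pw.edgeList.toFinset := by
  obtain ⟨W, hsupp, hedges⟩ := MWalk.exists_of_seq hc.ends_eq ha.isLeft
  refine ⟨_, _, W, ?_, ?_⟩
  · rw [MWalk.IsPath, hsupp]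
    refine List.nodup_range.map_on fun x hx y hy h => hc.vn_injOn ?_ ?_ h <;>
      (have := ha.lt; simp at hx hy; omega)
  · ext g
    rw [Finset.mem_filter, List.mem_toFinset, ha.inl_mem_iff hc hK,
      ← List.mem_map_of_injective Sum.inl_injective, hedges]
    simp

lemma inr_ends_iff (hc : CircuitEnum (Sum.elim ends endsL) C m vn en)
    (ha : IsComponentArc K m vn en k) {l : L} {j : ℕ} (hj : j < m) (hjl : en j = Sum.inr l) :
    k ≤ j ∧ ((∀ w ∈ endsL l, K w) ↔ j ≤ k ∧ (j + 1 ≤ k ∨ j = m - 1)) ∧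
      ((∃ w ∈ endsL l, K w) ↔ j ≤ k ∨ j + 1 ≤ k ∨ j = m - 1) := by
  have hends : endsL l = s(vn j, vn (j + 1)) := by simpa [hjl] using hc.ends_eq j
  refine ⟨not_lt.1 fun hjk => by simpa [hjl] using ha.isLeft j hjk, ?_, ?_⟩
  · rw [hends, Sym2.forall_mem_pair, ha.mem_iff j hj, ha.mem_iff_succ hc hj]
  · simp only [hends, Sym2.mem_iff, exists_eq_or_imp, exists_eq_left, ha.mem_iff j hj,
      ha.mem_iff_succ hc hj]

lemma card_links_of_eq [Fintype L] (hc : CircuitEnum (Sum.elim ends endsL) C m vn en)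
    (ha : IsComponentArc K m vn en k) (hkm : k = m - 1) :
    (Finset.univ.filter (fun l : L => Sum.inr l ∈ C ∧ ∀ w ∈ endsL l, K w)).card = 1 ∧
      (Finset.univ.filter (fun l : L => Sum.inr l ∈ C ∧ (∃ w ∈ endsL l, K w) ∧
        ¬ ∀ w ∈ endsL l, K w)).card = 0 := by
  obtain ⟨lk, hlk⟩ := Sum.isRight_iff.1 ha.isRight
  refine ⟨Finset.card_eq_one.2 ⟨lk, Finset.ext fun l => ?_⟩,
    Finset.card_eq_zero.2 (Finset.filter_eq_empty_iff.2 fun l _ ⟨hl, _, hnall⟩ => ?_)⟩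
  · simp only [Finset.mem_filter, Finset.mem_univ, true_and, Finset.mem_singleton]
    constructor
    · rintro ⟨hl, hall⟩
      obtain ⟨j, hj, hjl⟩ := hc.exists_lt_of_mem hl
      obtain ⟨hkj, hall', -⟩ := ha.inr_ends_iff hc hj hjl
      obtain rfl : j = k := by have := hall'.1 hall; omega
      exact Sum.inr_injective (hjl.symm.trans hlk)
    · rintro rfl
      exact ⟨hlk ▸ hc.en_mem k, (ha.inr_ends_iff hc ha.lt hlk).2.1.2 (by omega)⟩
  · obtain ⟨j, hj, hjl⟩ := hc.exists_lt_of_mem hl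
    exact hnall ((ha.inr_ends_iff hc hj hjl).2.1.2 (by omega))

lemma card_links_of_lt [Fintype L] (hc : CircuitEnum (Sum.elim ends endsL) C m vn en)
    (hK : ∀ g x y, ends g = s(x, y) → K x → K y) (ha : IsComponentArc K m vn en k)
    (hkm : k < m - 1) :
    (Finset.univ.filter (fun l : L => Sum.inr l ∈ C ∧ ∀ w ∈ endsL l, K w)).card = 0 ∧
      (Finset.univ.filter (fun l : L => Sum.inr l ∈ C ∧ (∃ w ∈ endsL l, K w) ∧
        ¬ ∀ w ∈ endsL l, K w)).card = 2 := by
  obtain ⟨lk, hlk⟩ := Sum.isRight_iff.1 ha.isRight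
  obtain ⟨l', hl'⟩ : ∃ l', en (m - 1) = Sum.inr l' := by
    refine Sum.isRight_iff.1 (Sum.not_isLeft.1 fun hleft => ?_)
    obtain ⟨g, hg⟩ := Sum.isLeft_iff.1 hleft
    have hends : ends g = s(vn 0, vn (m - 1)) := by simpa [hg, Sym2.eq_swap] using hc.ends_last
    have := (ha.mem_iff (m - 1) (by omega)).1
      (hK g _ _ hends ((ha.mem_iff 0 (by omega)).2 (Nat.zero_le _)))
    omega
  refine ⟨Finset.card_eq_zero.2 (Finset.filter_eq_empty_iff.2 fun l _ ⟨hl, hin⟩ => ?_),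
    Finset.card_eq_two.2 ⟨lk, l', fun h => ?_, Finset.ext fun l => ?_⟩⟩
  · obtain ⟨j, hj, hjl⟩ := hc.exists_lt_of_mem hl
    have := (ha.inr_ends_iff hc hj hjl).2.1.1 hin
    have := (ha.inr_ends_iff hc hj hjl).1
    omega
  · have := hc.en_injOn ha.lt (by omega) (hlk.trans (h ▸ hl').symm)
    omega
  · simp only [Finset.mem_filter, Finset.mem_univ, true_and, Finset.mem_insert,
      Finset.mem_singleton]
    constructor
    · rintro ⟨hl, hex, hall⟩
      obtain ⟨j, hj, hjl⟩ := hc.exists_lt_of_mem hl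
      obtain ⟨hkj, hall', hex'⟩ := ha.inr_ends_iff hc hj hjl
      rw [hall'] at hall
      rw [hex'] at hex
      rcases Nat.lt_or_ge j (m - 1) with hj' | hj'
      · obtain rfl : j = k := by omega
        exact .inl (Sum.inr_injective (hjl.symm.trans hlk))
      · obtain rfl : j = m - 1 := by omega
        exact .inr (Sum.inr_injective (hjl.symm.trans hl'))
    · rintro (rfl | rfl)
      · obtain ⟨-, hall', hex'⟩ := ha.inr_ends_iff hc ha.lt hlk
        exact ⟨hlk ▸ hc.en_mem _, hex'.2 (by omega), fun h => by have := hall'.1 h; omega⟩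
      · obtain ⟨-, hall', hex'⟩ := ha.inr_ends_iff hc (by omega) hl'
        exact ⟨hl' ▸ hc.en_mem _, hex'.2 (by omega), fun h => by have := hall'.1 h; omega⟩

theorem card_links [Fintype L] (hc : CircuitEnum (Sum.elim ends endsL) C m vn en)
    (hK : ∀ g x y, ends g = s(x, y) → K x → K y) (ha : IsComponentArc K m vn en k) :
    ((Finset.univ.filter (fun l : L => Sum.inr l ∈ C ∧ ∀ w ∈ endsL l, K w)).card = 1 ∧
      (Finset.univ.filter (fun l : L => Sum.inr l ∈ C ∧ (∃ w ∈ endsL l, K w) ∧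
        ¬ ∀ w ∈ endsL l, K w)).card = 0) ∨
    ((Finset.univ.filter (fun l : L => Sum.inr l ∈ C ∧ ∀ w ∈ endsL l, K w)).card = 0 ∧
      (Finset.univ.filter (fun l : L => Sum.inr l ∈ C ∧ (∃ w ∈ endsL l, K w) ∧
        ¬ ∀ w ∈ endsL l, K w)).card = 2) := by
  rcases Nat.lt_or_ge k (m - 1) with hkm | hkm
  · exact .inr (ha.card_links_of_lt hc hK hkm)
  · exact .inl (ha.card_links_of_eq hc (by have := ha.lt; omega))

end IsComponentArc

end ComponentArc

def MinLinksThrough {V E L : Type*} (ends : E → Sym2 V) (endsL : L → Sym2 V) (e₀ : E ⊕ L)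
    (C : Finset (E ⊕ L)) : Prop :=
  ∀ C' : Finset (E ⊕ L), IsCircuit (Sum.elim ends endsL) C' → e₀ ∈ C' →
    (C.filter (fun x => x.isRight)).card ≤ (C'.filter (fun x => x.isRight)).card

namespace CircuitEnum

variable {V E L : Type*} {ends : E → Sym2 V} {endsL : L → Sym2 V} {C : Finset (E ⊕ L)}
  {m : ℕ} {vn : ℕ → V} {en : ℕ → E ⊕ L} {e₀ : E ⊕ L}

/-- If the arc `vn p, …, vn q` of a circuit through `e₀ = en (m - 1)` with the fewest links
carried the link `en j`, replacing that arc by a forest walk avoiding `e₀` would give a circuit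
through `e₀` with fewer links. -/
theorem isLeft_of_reachableVia (hc : CircuitEnum (Sum.elim ends endsL) C m vn en)
    (hlast : en (m - 1) = e₀)
    (hmin : MinLinksThrough ends endsL e₀ C)
    {p j q : ℕ} (hpj : p ≤ j) (hjq : j < q) (hq : q ≤ m - 1)
    (hT : ReachableVia ends (fun g => Sum.inl g ≠ e₀) (vn p) (vn q)) : (en j).isLeft := by
  have hm := hc.two_le
  have hne (t : ℕ) (ht : t < m) (htj : t ≠ j) : en t ≠ en j := fun h =>
    htj (hc.en_injOn ht (by omega) h)
  have hne₀ (t : ℕ) (ht : t < m - 1) : en t ≠ e₀ := fun h =>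
    absurd (hc.en_injOn (by omega) (by omega) (h.trans hlast.symm)) (by omega)
  rw [← Sum.not_isRight]
  intro hj
  let P : E ⊕ L → Prop := fun x => x ≠ e₀ ∧ (x.isRight → x ∈ C ∧ x ≠ en j)
  have hseg (a b : ℕ) (hab : a ≤ b) (hb : b ≤ m - 1) (hj : b ≤ j ∨ j < a) :
      ReachableVia (Sum.elim ends endsL) P (vn a) (vn b) :=
    ReachableVia.of_seq hc.ends_eq hab fun t _ _ =>
      ⟨hne₀ t (by omega), fun _ => ⟨hc.en_mem t, hne t (by omega) (by omega)⟩⟩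
  have hT' : ReachableVia (Sum.elim ends endsL) P (vn p) (vn q) :=
    hT.map Sum.inl (fun _ => rfl) fun _ hg => ⟨hg, by simp⟩
  have hends : vn 0 ≠ vn (m - 1) := fun h => by have := hc.vn_injOn (by omega) (by omega) h; omega
  obtain ⟨C', hC', he₀, hsub⟩ := exists_isCircuit_of_reachableVia
    (((hseg 0 p (by omega) (by omega) (by omega)).trans hT').trans
      (hseg q (m - 1) (by omega) le_rfl (by omega))) hends (hlast ▸ hc.ends_last)
    (fun h => h.1 rfl)
  have hlinks :
      C'.filter (fun x => x.isRight) ⊆ (C.filter (fun x => x.isRight)).erase (en j) := by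
    intro c hc'
    rw [Finset.mem_filter] at hc'
    rw [Finset.mem_erase, Finset.mem_filter]
    rcases hsub c hc'.1 with rfl | hP
    · exact ⟨fun h => hne (m - 1) (by omega) (by omega) (hlast.trans h), hlast ▸ hc.en_mem _,
        hc'.2⟩
    · exact ⟨(hP.2 hc'.2).2, (hP.2 hc'.2).1, hc'.2⟩
  have := Finset.card_le_card hlinks
  have := Finset.card_erase_lt_of_mem
    (Finset.mem_filter.2 ⟨hc.en_mem j, hj⟩ : en j ∈ C.filter (fun x => x.isRight))
  have := hmin C' hC' he₀
  omega

theorem exists_interval (hc : CircuitEnum (Sum.elim ends endsL) C m vn en)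
    (hlast : en (m - 1) = e₀)
    (hmin : MinLinksThrough ends endsL e₀ C)
    {z : V} {i₀ : ℕ} (hi₀ : i₀ < m)
    (h₀ : ReachableVia ends (fun g => Sum.inl g ≠ e₀) (vn i₀) z) :
    ∃ u w, w < m ∧
      (∀ i < m, ReachableVia ends (fun g => Sum.inl g ≠ e₀) (vn i) z ↔ u ≤ i ∧ i ≤ w) ∧
      ∀ j, u ≤ j → j < w → (en j).isLeft := by
  set Q : ℕ → Prop := fun i => ReachableVia ends (fun g => Sum.inl g ≠ e₀) (vn i) z
  set S := (Finset.range m).filter Q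
  have hS : S.Nonempty := ⟨i₀, Finset.mem_filter.2 ⟨Finset.mem_range.2 hi₀, h₀⟩⟩
  obtain ⟨hum, hu⟩ := Finset.mem_filter.1 (S.min'_mem hS)
  obtain ⟨hwm, hw⟩ := Finset.mem_filter.1 (S.max'_mem hS)
  rw [Finset.mem_range] at hum hwm
  have hleft (j : ℕ) (h₁ : S.min' hS ≤ j) (h₂ : j < S.max' hS) : (en j).isLeft :=
    hc.isLeft_of_reachableVia hlast hmin h₁ h₂ (by omega) (hu.trans hw.symm)
  have hmid (i : ℕ) (h₁ : S.min' hS ≤ i) : i ≤ S.max' hS → Q i := by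
    induction i, h₁ using Nat.le_induction with
    | base => exact fun _ => hu
    | succ i hi ih =>
      intro hiw
      obtain ⟨g, hg⟩ := Sum.isLeft_iff.1 (hleft i hi (by omega))
      have hge : Sum.inl g ≠ e₀ := fun h => absurd
        (hc.en_injOn (by omega) (by omega) (hg.trans (h.trans hlast.symm))) (by omega)
      have hends : ends g = s(vn i, vn (i + 1)) := by simpa [hg] using hc.ends_eq i
      exact (ReachableVia.of_ends hends hge).symm.trans (ih (by omega))
  refine ⟨S.min' hS, S.max' hS, hwm,
    fun i hi => ⟨fun hQ => ?_, fun h => hmid i h.1 h.2⟩, hleft⟩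
  have hiS : i ∈ S := Finset.mem_filter.2 ⟨Finset.mem_range.2 hi, hQ⟩
  exact ⟨S.min'_le i hiS, S.le_max' i hiS⟩

theorem exists_componentArc_of_not_touch (hc : CircuitEnum (Sum.elim ends endsL) C m vn en)
    (hlast : en (m - 1) = e₀)
    (hmin : MinLinksThrough ends endsL e₀ C)
    {v : V} (hfar : ∀ f, Sum.inl f = e₀ → ∀ c ∈ ends f, ¬ Nonempty (MWalk ends c v))
    {i₀ : ℕ} (hi₀m : i₀ < m) (hi₀ : Nonempty (MWalk ends (vn i₀) v)) :
    ∃ a k, IsComponentArc (fun w => Nonempty (MWalk ends w v)) m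
      (fun t => vn (a + t)) (fun t => en (a + t)) k := by
  have hK := nonempty_walk_iff_reachableVia (P := fun g => Sum.inl g ≠ e₀)
    (fun g hg => hfar g (not_not.1 hg)) hi₀
  obtain ⟨u, w, hwm, hiff, hleft⟩ := hc.exists_interval hlast hmin hi₀m ((hK _).1 hi₀)
  have huw : u ≤ w := by have := (hiff i₀ hi₀m).1 ((hK _).1 hi₀); omega
  refine ⟨u, w - u, .of_interval hc huw hwm (fun i hi => (hK _).trans (hiff i hi)) hleft ?_⟩
  rw [← Sum.not_isLeft]
  intro hw
  obtain ⟨g, hg⟩ := Sum.isLeft_iff.1 hw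
  have hends : ends g = s(vn w, vn (w + 1)) := by simpa [hg] using hc.ends_eq w
  have hKw : Nonempty (MWalk ends (vn w) v) := (hK _).2 ((hiff w hwm).2 ⟨huw, le_rfl⟩)
  rcases Nat.lt_or_ge w (m - 1) with hw' | hw'
  · have := (hiff (w + 1) (by omega)).1 ((hK _).1 (MWalk.nonempty_of_ends hends hKw))
    omega
  · obtain rfl : w = m - 1 := by omega
    exact hfar g (hg.symm.trans hlast) _ (hends ▸ Sym2.mem_mk_left _ _) hKw

/-- Without `f`, the component of `f` falls apart into the nodes reached from `vn 0` and those
reached from `vn (m - 1)`; on the circuit they form an initial and a final interval, and the arc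
wraps around through `f`. -/
theorem exists_componentArc_of_touch (hc : CircuitEnum (Sum.elim ends endsL) C m vn en)
    (hright : ∃ x ∈ C, x.isRight) {f : E} (hlast : en (m - 1) = Sum.inl f)
    (hmin : MinLinksThrough ends endsL (Sum.inl f) C)
    {v : V} (hK₀ : Nonempty (MWalk ends (vn 0) v)) :
    ∃ a k, IsComponentArc (fun w => Nonempty (MWalk ends w v)) m
      (fun t => vn (a + t)) (fun t => en (a + t)) k := by
  have hm := hc.two_le
  have hf : ends f = s(vn (m - 1), vn 0) := by simpa [hlast] using hc.ends_last
  obtain ⟨uX, wX, hwX, hX, hXleft⟩ := hc.exists_interval hlast hmin (z := vn 0) (i₀ := 0)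
    (by omega) (.refl _)
  obtain ⟨uY, wY, hwY, hY, hYleft⟩ := hc.exists_interval hlast hmin (z := vn (m - 1))
    (i₀ := m - 1) (by omega) (.refl _)
  have huX : uX = 0 := by have := (hX 0 (by omega)).1 (.refl _); omega
  obtain ⟨huY, hwY⟩ := (hY (m - 1) (by omega)).1 (.refl _)
  obtain rfl : wY = m - 1 := by omega
  subst huX
  have hK := nonempty_walk_iff_reachableVia_or (P := fun g => Sum.inl g ≠ (Sum.inl f : E ⊕ L))
    (fun g hg => Sum.inl_injective (not_not.1 hg)) hf hK₀
  have hsep : wX < uY := by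
    obtain ⟨x, hx, hxr⟩ := hright
    obtain ⟨j, hj, rfl⟩ := hc.exists_lt_of_mem hx
    rw [← Sum.not_isLeft] at hxr
    by_contra! h
    rcases (by omega : j < wX ∨ (uY ≤ j ∧ j < m - 1) ∨ j = m - 1) with hj' | hj' | rfl
    · exact hxr (hXleft j (Nat.zero_le _) hj')
    · exact hxr (hYleft j hj'.1 hj'.2)
    · simp [hlast] at hxr
  refine ⟨uY, m - uY + wX, .of_wrap hc hsep (by omega) (fun i hi => ?_) (fun j hj hj' => ?_) ?_⟩
  · rw [hK, hX i hi, hY i hi]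
    omega
  · rcases (by omega : j < wX ∨ (uY ≤ j ∧ j < m - 1) ∨ j = m - 1) with hj' | hj' | rfl
    · exact hXleft j (Nat.zero_le _) hj'
    · exact hYleft j hj'.1 hj'.2
    · simp [hlast]
  · rw [← Sum.not_isLeft]
    intro hw
    obtain ⟨g, hg⟩ := Sum.isLeft_iff.1 hw
    have hends : ends g = s(vn wX, vn (wX + 1)) := by simpa [hg] using hc.ends_eq wX
    have hgf : Sum.inl g ≠ (Sum.inl f : E ⊕ L) := fun h =>
      absurd (hc.en_injOn (by omega) (by omega) (hg.trans (h.trans hlast.symm))) (by omega)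
    have := (hX (wX + 1) (by omega)).1
      ((ReachableVia.of_ends hends hgf).symm.trans ((hX wX hwX).2 ⟨Nat.zero_le _, le_rfl⟩))
    omega

theorem exists_componentArc (hc : CircuitEnum (Sum.elim ends endsL) C m vn en)
    (hright : ∃ x ∈ C, x.isRight) (hlast : en (m - 1) = e₀)
    (hmin : MinLinksThrough ends endsL e₀ C)
    {v : V} {i₀ : ℕ} (hi₀m : i₀ < m) (hi₀ : Nonempty (MWalk ends (vn i₀) v)) :
    ∃ a k, IsComponentArc (fun w => Nonempty (MWalk ends w v)) m
      (fun t => vn (a + t)) (fun t => en (a + t)) k := by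
  by_cases htouch : ∃ f, Sum.inl f = e₀ ∧ ∃ c ∈ ends f, Nonempty (MWalk ends c v)
  · obtain ⟨f, rfl, c, hcf, hKc⟩ := htouch
    have hf : ends f = s(vn (m - 1), vn 0) := by simpa [hlast] using hc.ends_last
    rw [hf, Sym2.mem_iff] at hcf
    refine hc.exists_componentArc_of_touch hright hlast hmin ?_
    rcases hcf with rfl | rfl
    · exact MWalk.nonempty_of_ends hf hKc
    · exact hKc
  · exact hc.exists_componentArc_of_not_touch hlast hmin
      (fun f hf c hcf hKc => htouch ⟨f, hf, c, hcf, hKc⟩) hi₀m hi₀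

end CircuitEnum

theorem minimal_circuit_structure_on_components_general
    {V E L : Type*} [Fintype V] [Fintype E] [Fintype L]
    (ends : E → Sym2 V)
    (endsL : L → Sym2 V)
    (hforest : ∀ C : Finset E, ¬ IsCircuit ends C)
    (C : Finset (E ⊕ L)) (hC : IsCircuit (Sum.elim ends endsL) C)
    (e₀ : E ⊕ L) (he₀ : e₀ ∈ C)
    (hmin : ∀ C' : Finset (E ⊕ L), IsCircuit (Sum.elim ends endsL) C' → e₀ ∈ C' →
      (C.filter (fun x => x.isRight)).card ≤ (C'.filter (fun x => x.isRight)).card) :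
    ∀ v : V,
      (∃ x ∈ C, ∃ w, w ∈ Sum.elim ends endsL x ∧ Nonempty (MWalk ends w v)) →
      ((∃ (a b : V) (pw : MWalk ends a b), pw.IsPath ∧
          Finset.univ.filter
            (fun e : E => Sum.inl e ∈ C ∧ ∃ w, w ∈ ends e ∧ Nonempty (MWalk ends w v))
            = pw.edgeList.toFinset) ∧
        (((Finset.univ.filter (fun l : L => Sum.inr l ∈ C ∧
              ∀ w ∈ endsL l, Nonempty (MWalk ends w v))).card = 1 ∧
          (Finset.univ.filter (fun l : L => Sum.inr l ∈ C ∧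
              (∃ w ∈ endsL l, Nonempty (MWalk ends w v)) ∧
              ¬ ∀ w ∈ endsL l, Nonempty (MWalk ends w v))).card = 0) ∨
         ((Finset.univ.filter (fun l : L => Sum.inr l ∈ C ∧
              ∀ w ∈ endsL l, Nonempty (MWalk ends w v))).card = 0 ∧
          (Finset.univ.filter (fun l : L => Sum.inr l ∈ C ∧
              (∃ w ∈ endsL l, Nonempty (MWalk ends w v)) ∧
              ¬ ∀ w ∈ endsL l, Nonempty (MWalk ends w v))).card = 2))) := by
  intro v ⟨x, hx, w, hw, hKw⟩
  obtain ⟨m, vn, en, hc⟩ := hC.exists_circuitEnum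
  obtain ⟨vn, en, hc, hlast⟩ := hc.exists_rotate_last he₀
  obtain ⟨i, hi, rfl⟩ := hc.exists_vn_eq_of_mem_ends hx hw
  obtain ⟨a, k, ha⟩ := hc.exists_componentArc (hC.exists_isRight hforest) hlast hmin hi hKw
  have hK (g : E) (x y : V) (hg : ends g = s(x, y)) : Nonempty (MWalk ends x v) →
      Nonempty (MWalk ends y v) := MWalk.nonempty_of_ends hg
  -- `convert` reconciles the decidability instances, which the statement obtains via `Fintype V`.
  exact ⟨by convert ha.exists_isPath_eq (hc.rotate a) hK,
    by convert ha.card_links (hc.rotate a) hK⟩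

/-- Let `(V, E)` be a forest (edges `ends`) and `F` a multiset of links (`endsL`) such
that adding the links makes the graph 2-edge-connected.  Let `C` be a circuit of the
augmented graph containing a given element `e₀` and having the minimum number of links
among all circuits containing `e₀`.  Then for every connected component of the forest
(represented by a node `v`) that contains a node of `C`: the intersection of `C` with
the edges of the component is the edge set of a (possibly empty) path, and `C` contains
either exactly one link with both endpoints in the component and none with exactly one
endpoint in it, or exactly two links with exactly one endpoint in the component and
none with both endpoints in it. -/
theorem minimal_circuit_structure_on_components
    {V E L : Type*} [Fintype V] [Fintype E] [Fintype L]
    (ends : E → Sym2 V) (hloopE : ∀ e : E, ¬ (ends e).IsDiag)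
    (endsL : L → Sym2 V) (hloopL : ∀ l : L, ¬ (endsL l).IsDiag)
    (hforest : ∀ C : Finset E, ¬ IsCircuit ends C)
    (h2ec : 2 ≤ Fintype.card V ∧ ∀ X : Finset V, X ≠ ∅ → X ≠ Finset.univ →
      2 ≤ cutDeg (Sum.elim ends endsL) X)
    (C : Finset (E ⊕ L)) (hC : IsCircuit (Sum.elim ends endsL) C)
    (e₀ : E ⊕ L) (he₀ : e₀ ∈ C)
    (hmin : ∀ C' : Finset (E ⊕ L), IsCircuit (Sum.elim ends endsL) C' → e₀ ∈ C' →
      (C.filter (fun x => x.isRight)).card ≤ (C'.filter (fun x => x.isRight)).card) :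
    ∀ v : V,
      (∃ x ∈ C, ∃ w, w ∈ Sum.elim ends endsL x ∧ Nonempty (MWalk ends w v)) →
      ((∃ (a b : V) (pw : MWalk ends a b), pw.IsPath ∧
          Finset.univ.filter
            (fun e : E => Sum.inl e ∈ C ∧ ∃ w, w ∈ ends e ∧ Nonempty (MWalk ends w v))
            = pw.edgeList.toFinset) ∧
        (((Finset.univ.filter (fun l : L => Sum.inr l ∈ C ∧
              ∀ w ∈ endsL l, Nonempty (MWalk ends w v))).card = 1 ∧
          (Finset.univ.filter (fun l : L => Sum.inr l ∈ C ∧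
              (∃ w ∈ endsL l, Nonempty (MWalk ends w v)) ∧
              ¬ ∀ w ∈ endsL l, Nonempty (MWalk ends w v))).card = 0) ∨
         ((Finset.univ.filter (fun l : L => Sum.inr l ∈ C ∧
              ∀ w ∈ endsL l, Nonempty (MWalk ends w v))).card = 0 ∧
          (Finset.univ.filter (fun l : L => Sum.inr l ∈ C ∧
              (∃ w ∈ endsL l, Nonempty (MWalk ends w v)) ∧
              ¬ ∀ w ∈ endsL l, Nonempty (MWalk ends w v))).card = 2))) :=
  minimal_circuit_structure_on_components_general ends endsL hforest C hC e₀ he₀ hmin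
end
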